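/- arXiv:0911.4340 — 11 statements merged into one kernel-verified Lean document; each statement's English description precedes it below -/
import Mathlib

section
/- Let G be an n-isobicyclic group and let p be a prime dividing n, with p^e the exact power of p dividing n (p^e ∣ n and p^(e+1) ∤ n). Then every Sylow p-subgroup P of G is p^e-isobicyclic; that is, there exist elements a, b ∈ P of order p^e with P = ⟨a⟩⟨b⟩, ⟨a⟩ ∩ ⟨b⟩ = 1, and an automorphism of P transposing a and b. -/
open scoped Pointwise
open Subgroup

/-!
Put `q = n / p ^ e`. The elements `x ^ q` and `y ^ q` have order `p ^ e`, their cyclic groups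
meet trivially, and `α` swaps them. If `Q ⊇ ⟨x ^ q⟩` and `R ⊇ ⟨y ^ q⟩` are Sylow subgroups and
`Q = (u * v) • R` with `u ∈ ⟨x⟩`, `v ∈ ⟨y⟩` (possible since `G = ⟨x⟩⟨y⟩`), then the Sylow
subgroup `u⁻¹ • Q = v • R` contains both, because `⟨x⟩` and `⟨y⟩` are abelian. Since
`|G| = n ^ 2`, it has order `p ^ e * p ^ e = |⟨x ^ q⟩| * |⟨y ^ q⟩|`, so it is the product
`⟨x ^ q⟩⟨y ^ q⟩`, which `α` maps onto itself. All Sylow `p`-subgroups are isomorphic.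
-/

def IsIsobicyclicPair {G : Type*} [Group G] (n : ℕ) (x y : G) : Prop :=
  orderOf x = n ∧ orderOf y = n ∧ (zpowers x * zpowers y : Set G) = Set.univ ∧
    zpowers x ⊓ zpowers y = ⊥ ∧ ∃ α : G ≃* G, α x = y ∧ α y = x

theorem IsIsobicyclicPair.map {G H : Type*} [Group G] [Group H] {n : ℕ} {x y : G}
    (h : IsIsobicyclicPair n x y) (φ : G ≃* H) : IsIsobicyclicPair n (φ x) (φ y) := by
  obtain ⟨hx, hy, hprod, hinf, α, hαx, hαy⟩ := h
  have hz : ∀ g : G, zpowers (φ g) = (zpowers g).map φ.toMonoidHom := fun g =>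
    (MonoidHom.map_zpowers φ.toMonoidHom g).symm
  refine ⟨by rwa [MulEquiv.orderOf_eq], by rwa [MulEquiv.orderOf_eq], ?_, ?_,
    (φ.symm.trans α).trans φ, by simp [hαx], by simp [hαy]⟩
  · rw [hz, hz, coe_map, coe_map, ← Set.image_mul, hprod]
    exact Set.image_univ_of_surjective φ.surjective
  · rw [hz, hz, ← map_inf _ _ _ φ.injective, hinf, Subgroup.map_bot]

theorem Nat.factorization_eq_of_pow_dvd_of_not_pow_dvd {p n e : ℕ} (hp : p.Prime) (hn : n ≠ 0)
    (h : p ^ e ∣ n) (h' : ¬ p ^ (e + 1) ∣ n) : n.factorization p = e :=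
  le_antisymm (not_lt.mp fun hlt => h' ((hp.pow_dvd_iff_le_factorization hn).mpr hlt))
    ((hp.pow_dvd_iff_le_factorization hn).mp h)

theorem Sylow.card_eq_of_card_eq_mul_self {G : Type*} [Group G] [Finite G] {p n e : ℕ}
    [Fact p.Prime] (P : Sylow p G) (hG : Nat.card G = n * n)
    (h : p ^ e ∣ n) (h' : ¬ p ^ (e + 1) ∣ n) : Nat.card P = p ^ e * p ^ e := by
  have hn : n ≠ 0 := by
    rintro rfl
    exact Nat.card_pos.ne' hG
  rw [P.card_eq_multiplicity, hG, Nat.factorization_mul hn hn, Finsupp.add_apply,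
    Nat.factorization_eq_of_pow_dvd_of_not_pow_dvd Fact.out hn h h', pow_add]

theorem Sylow.le_smul_of_mem_centralizer {G : Type*} [Group G] {p : ℕ} {P : Sylow p G}
    {A : Subgroup G} (hA : A ≤ P) {g : G} (hg : g ∈ centralizer (A : Set G)) :
    A ≤ ↑(g • P) := by
  intro a ha
  rw [Sylow.coe_subgroup_smul, mem_smul_pointwise_iff_exists]
  refine ⟨a, hA ha, ?_⟩
  rw [MulAut.smul_def, MulAut.conj_apply, ← mem_centralizer_iff.mp hg a ha, mul_inv_cancel_right]

theorem Sylow.exists_le_of_mul_eq_univ {G : Type*} [Group G] {p : ℕ} [Fact p.Prime]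
    [Finite (Sylow p G)] {H K A B : Subgroup G} (hHK : (H : Set G) * (K : Set G) = Set.univ)
    (hHA : H ≤ centralizer (A : Set G)) (hKB : K ≤ centralizer (B : Set G))
    (hA : IsPGroup p A) (hB : IsPGroup p B) : ∃ P : Sylow p G, A ≤ P ∧ B ≤ P := by
  obtain ⟨Q, hAQ⟩ := hA.exists_le_sylow
  obtain ⟨R, hBR⟩ := hB.exists_le_sylow
  obtain ⟨g, rfl⟩ := MulAction.exists_smul_eq G R Q
  obtain ⟨u, hu, v, hv, rfl⟩ : g ∈ (H : Set G) * (K : Set G) := hHK ▸ Set.mem_univ g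
  have hQ : u⁻¹ • (u * v) • R = v • R := by rw [smul_smul, inv_mul_cancel_left]
  refine ⟨v • R, ?_, Sylow.le_smul_of_mem_centralizer hBR (hKB hv)⟩
  rw [← hQ]
  exact Sylow.le_smul_of_mem_centralizer hAQ (hHA (inv_mem hu))

theorem Subgroup.isIsobicyclicPair_of_card_eq {G : Type*} [Group G] [Finite G] {m : ℕ}
    (P : Subgroup G) (hP : Nat.card P = m * m) {a b : G} (ha : a ∈ P) (hb : b ∈ P)
    (hoa : orderOf a = m) (hob : orderOf b = m) (hab : zpowers a ⊓ zpowers b = ⊥)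
    (α : G ≃* G) (hαa : α a = b) (hαb : α b = a) :
    IsIsobicyclicPair m (⟨a, ha⟩ : P) ⟨b, hb⟩ := by
  have hz : ∀ g : P, (zpowers g).map P.subtype = zpowers (g : G) := fun g =>
    MonoidHom.map_zpowers _ g
  have hinf : zpowers (⟨a, ha⟩ : P) ⊓ zpowers ⟨b, hb⟩ = ⊥ :=
    map_injective P.subtype_injective <| by
      rw [map_inf _ _ _ P.subtype_injective, hz, hz, Subgroup.map_bot]
      exact hab
  have hcompl : IsComplement' (zpowers (⟨a, ha⟩ : P)) (zpowers ⟨b, hb⟩) :=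
    isComplement'_of_card_mul_and_disjoint
      (by rw [Nat.card_zpowers, Nat.card_zpowers, orderOf_mk, orderOf_mk, hoa, hob, hP])
      (disjoint_iff.mpr hinf)
  have hsup : zpowers a ⊔ zpowers b = P := by
    rw [← hz ⟨a, ha⟩, ← hz ⟨b, hb⟩, ← map_sup, hcompl.sup_eq_top, ← MonoidHom.range_eq_map,
      range_subtype]
  have hαP : P.map α.toMonoidHom = P := by
    rw [← hsup, map_sup, MonoidHom.map_zpowers, MonoidHom.map_zpowers, MulEquiv.coe_toMonoidHom,
      hαa, hαb, sup_comm]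
  refine ⟨by rw [orderOf_mk, hoa], by rw [orderOf_mk, hob], hcompl.mul_eq, hinf,
    (α.subgroupMap P).trans (MulEquiv.subgroupCongr hαP), ?_, ?_⟩ <;>
    exact Subtype.ext ‹_›

theorem sylow_of_isobicyclic_isIsobicyclic_general
    {G : Type*} [Group G] [Finite G] (n : ℕ) (x y : G)
    (hx : orderOf x = n) (hy : orderOf y = n)
    (hprod : (↑(Subgroup.zpowers x) * ↑(Subgroup.zpowers y) : Set G) = Set.univ)
    (hinter : Subgroup.zpowers x ⊓ Subgroup.zpowers y = ⊥)
    (α : G ≃* G) (hαx : α x = y) (hαy : α y = x)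
    (p e : ℕ) (hp : p.Prime)
    (hpe : p ^ e ∣ n) (hpe' : ¬ p ^ (e + 1) ∣ n)
    (P : Sylow p G) :
    ∃ a b : (P : Subgroup G),
      orderOf a = p ^ e ∧ orderOf b = p ^ e ∧
      (↑(Subgroup.zpowers a) * ↑(Subgroup.zpowers b) : Set (P : Subgroup G)) = Set.univ ∧
      Subgroup.zpowers a ⊓ Subgroup.zpowers b = ⊥ ∧
      ∃ β : (P : Subgroup G) ≃* (P : Subgroup G), β a = b ∧ β b = a := by
  have : Fact p.Prime := ⟨hp⟩
  have hcard : Nat.card G = n * n := by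
    have hcompl := isComplement'_of_disjoint_and_mul_eq_univ (disjoint_iff.mpr hinter) hprod
    rw [← hcompl.card_mul_card, Nat.card_zpowers, Nat.card_zpowers, hx, hy]
  obtain ⟨q, rfl⟩ := hpe
  have hq : q ≠ 0 := right_ne_zero_of_mul (hx ▸ (orderOf_pos x).ne')
  have horder : ∀ z : G, orderOf z = p ^ e * q → orderOf (z ^ q) = p ^ e := fun z hz => by
    rw [orderOf_pow_of_dvd hq (hz ▸ dvd_mul_left q _), hz, Nat.mul_div_cancel _ hq.bot_lt]
  have hpgroup : ∀ z : G, orderOf z = p ^ e * q → IsPGroup p (zpowers (z ^ q)) := fun z hz =>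
    IsPGroup.of_card (by rw [Nat.card_zpowers, horder z hz])
  have hle : ∀ z : G, zpowers (z ^ q) ≤ zpowers z := fun z =>
    zpowers_le.mpr (pow_mem (mem_zpowers z) q)
  have hcentral : ∀ z : G, zpowers z ≤ centralizer (zpowers (z ^ q) : Set G) := fun z =>
    (le_centralizer (zpowers z)).trans (centralizer_le (SetLike.coe_subset_coe.mpr (hle z)))
  obtain ⟨Q, hxQ, hyQ⟩ := Sylow.exists_le_of_mul_eq_univ hprod (hcentral x) (hcentral y)
    (hpgroup x hx) (hpgroup y hy)
  have hQ := (Q : Subgroup G).isIsobicyclicPair_of_card_eq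
    (Q.card_eq_of_card_eq_mul_self hcard (dvd_mul_right _ _) hpe')
    (hxQ (mem_zpowers _)) (hyQ (mem_zpowers _)) (horder x hx) (horder y hy)
    (le_bot_iff.mp (hinter ▸ inf_le_inf (hle x) (hle y))) α
    (by rw [map_pow, hαx]) (by rw [map_pow, hαy])
  exact ⟨_, _, hQ.map (Sylow.equiv Q P)⟩

/-- If `G` is `n`-isobicyclic and `p^e` is the exact power of the prime `p`
dividing `n`, then every Sylow `p`-subgroup of `G` is `p^e`-isobicyclic. -/
theorem sylow_of_isobicyclic_isIsobicyclic
    {G : Type*} [Group G] [Finite G] (n : ℕ) (hn : 0 < n) (x y : G)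
    (hx : orderOf x = n) (hy : orderOf y = n)
    (hprod : (↑(Subgroup.zpowers x) * ↑(Subgroup.zpowers y) : Set G) = Set.univ)
    (hinter : Subgroup.zpowers x ⊓ Subgroup.zpowers y = ⊥)
    (α : G ≃* G) (hαx : α x = y) (hαy : α y = x)
    (p e : ℕ) (hp : p.Prime) (hpn : p ∣ n)
    (hpe : p ^ e ∣ n) (hpe' : ¬ p ^ (e + 1) ∣ n)
    (P : Sylow p G) :
    ∃ a b : (P : Subgroup G),
      orderOf a = p ^ e ∧ orderOf b = p ^ e ∧
      (↑(Subgroup.zpowers a) * ↑(Subgroup.zpowers b) : Set (P : Subgroup G)) = Set.univ ∧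
      Subgroup.zpowers a ⊓ Subgroup.zpowers b = ⊥ ∧
      ∃ β : (P : Subgroup G) ≃* (P : Subgroup G), β a = b ∧ β b = a :=
  sylow_of_isobicyclic_isIsobicyclic_general n x y hx hy hprod hinter α hαx hαy p e hp hpe hpe' P
end

section
/- Let G be an n-isobicyclic group, let p_1 > p_2 > ... > p_l be the distinct primes dividing n in decreasing order, and for each i let P_i be a Sylow p_i-subgroup of G. Then for each i = 1, ..., l the set product N_i := P_1·P_2·⋯·P_i = { a_1 a_2 ⋯ a_i : a_j ∈ P_j } is a normal subgroup of G. -/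
/-!
In a group `G = ⟨x⟩⟨y⟩` with an automorphism `α` swapping `x` and `y`, the Sylow subgroup `P` for
the largest prime `p` dividing `|G|` is normal. Counting the cosets of `⟨y⟩` shows that
`⟨y⟩ ∩ x⟨y⟩x⁻¹` is nontrivial; it is normal, so `G` has a normal subgroup `N` of prime order `q`,
and `M = N · α(N)` is an `α`-invariant normal `q`-subgroup. By induction `PM/M` is normal in `G/M`,
so `PM` is normal in `G`. If `q = p` then `PM = P`. Otherwise `p > q` does not divide
`|Aut N| = q - 1`, so `P` centralizes `M`, `PM` normalizes `P`, and the Frattini argument gives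
`N_G(P) = G`. Applied to `G / (P₁ ⋯ Pᵢ₋₁)`, whose largest prime divisor is `pᵢ`, this makes each
`P₁ ⋯ Pᵢ` a normal, `α`-invariant subgroup.
-/

open scoped Pointwise

open Subgroup

section

variable {G : Type*} [Group G]

theorem Subgroup.eq_zpowers_pow_orderOf_div_card [Finite G] {g : G} {H : Subgroup G}
    (hH : H ≤ zpowers g) : H = zpowers (g ^ (orderOf g / Nat.card H)) := by
  obtain ⟨a, rfl⟩ := (le_zpowers_iff g H).1 hH
  rw [Nat.card_zpowers]
  set d := orderOf (g ^ a)
  have hd : d ∣ orderOf g := orderOf_pow_dvd a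
  have hn : orderOf g ≠ 0 := (orderOf_pos g).ne'
  refine eq_of_le_of_card_ge (zpowers_le.2 ?_) ?_
  · have h1 : orderOf g ∣ a * d := orderOf_dvd_of_pow_eq_one (by rw [pow_mul, pow_orderOf_eq_one])
    rw [← Nat.div_mul_cancel hd] at h1
    obtain ⟨c, hc⟩ := Nat.dvd_of_mul_dvd_mul_right (orderOf_pos _) h1
    rw [hc, pow_mul]
    exact pow_mem (mem_zpowers _) c
  · have hd0 : orderOf g / d ≠ 0 := (Nat.div_ne_zero_iff_of_dvd hd).2 ⟨hn, (orderOf_pos _).ne'⟩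
    rw [Nat.card_zpowers, orderOf_pow_of_dvd hd0 (Nat.div_dvd_of_dvd hd), Nat.div_div_self hd hn,
      Nat.card_zpowers]

theorem Subgroup.eq_of_le_zpowers_of_card_eq [Finite G] {g : G} {H K : Subgroup G}
    (hH : H ≤ zpowers g) (hK : K ≤ zpowers g) (h : Nat.card H = Nat.card K) : H = K := by
  rw [eq_zpowers_pow_orderOf_div_card hH, eq_zpowers_pow_orderOf_div_card hK, h]

theorem Subgroup.Normal.of_le_zpowers {w : G} (hw : (zpowers w).Normal) {H : Subgroup G}
    (hH : H ≤ zpowers w) : H.Normal := by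
  obtain ⟨k, rfl⟩ := (le_zpowers_iff w H).1 hH
  refine ⟨fun a ha g => ?_⟩
  obtain ⟨i, rfl⟩ := mem_zpowers_iff.1 ha
  obtain ⟨m, hm⟩ := mem_zpowers_iff.1 (hw.conj_mem w (mem_zpowers w) g)
  have hcomm : (w ^ m) ^ k = (w ^ k) ^ m := by simpa only [zpow_natCast] using zpow_comm w m k
  rw [← conj_zpow, ← conj_pow, ← hm, hcomm]
  exact zpow_mem (zpow_mem (mem_zpowers _) m) i

theorem Subgroup.inf_comap_conj_ne_bot [Finite G] {B : Subgroup G} {x : G} (hx : x ∉ B)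
    (hB : B.index ≤ Nat.card B) : B ⊓ B.comap (MulAut.conj x⁻¹).toMonoidHom ≠ ⊥ := by
  classical
  intro hD
  let f : B → G ⧸ B := fun b => ((b * x : G) : G ⧸ B)
  have hf : Function.Injective f := by
    intro a b hab
    rw [QuotientGroup.eq] at hab
    have hab' : (a : G)⁻¹ * b ∈ B ⊓ B.comap (MulAut.conj x⁻¹).toMonoidHom :=
      ⟨B.mul_mem (B.inv_mem a.2) b.2, by simpa [mul_assoc] using hab⟩
    rw [hD, mem_bot, inv_mul_eq_one] at hab'
    exact Subtype.ext hab'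
  have hone : ∀ b, f b ≠ ((1 : G) : G ⧸ B) := by
    intro b hb
    rw [QuotientGroup.eq, mul_one, inv_mem_iff] at hb
    exact hx (by simpa using mul_mem (inv_mem b.2) hb)
  have := Fintype.ofFinite B
  have := Fintype.ofFinite (G ⧸ B)
  have hlt := Fintype.card_lt_of_injective_of_notMem f hf (b := ((1 : G) : G ⧸ B))
    (by rintro ⟨b, hb⟩; exact hone b hb)
  rw [← Nat.card_eq_fintype_card, ← Nat.card_eq_fintype_card] at hlt
  exact absurd hB (not_le.2 hlt)

theorem Subgroup.mem_centralizer_of_coprime_card_mulAut {N : Subgroup G} [N.Normal]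
    {g : G} (hg : (orderOf g).Coprime (Nat.card (MulAut N))) : g ∈ centralizer N := by
  have hdvd : orderOf (MulAut.conjNormal g : MulAut N) ∣ 1 :=
    hg ▸ Nat.dvd_gcd (orderOf_map_dvd _ g) (_root_.orderOf_dvd_natCard _)
  rw [mem_centralizer_iff]
  intro n hn
  have := congrArg (fun φ : MulAut N => (φ ⟨n, hn⟩ : G)) (orderOf_eq_one_iff.1 (Nat.dvd_one.1 hdvd))
  simp only [MulAut.conjNormal_apply, MulAut.one_apply] at this
  exact (mul_inv_eq_iff_eq_mul.1 this).symm

theorem IsPGroup.le_centralizer_zpowers [Finite G] {p : ℕ} [hp : Fact p.Prime] {P : Subgroup G}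
    (hP : IsPGroup p P) {v : G} [(zpowers v).Normal] (hv : (orderOf v).Prime)
    (hvp : orderOf v < p) : P ≤ centralizer (zpowers v) := by
  intro u hu
  apply mem_centralizer_of_coprime_card_mulAut
  rw [IsCyclic.card_mulAut, Nat.card_zpowers, Nat.totient_prime hv]
  obtain ⟨k, hk⟩ := hP.exists_orderOf_dvd_pow ⟨u, hu⟩
  rw [Subgroup.orderOf_mk] at hk
  exact (Nat.Coprime.pow_left k (Nat.coprime_of_lt_prime (by have := hv.two_le; omega)
    (by omega) hp.out)).coprime_dvd_left hk

theorem IsPGroup.le_of_sylow_le_normal {p : ℕ} [Fact p.Prime] [Finite (Sylow p G)]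
    {R H : Subgroup G} [H.Normal] (hR : IsPGroup p R) (P : Sylow p G) (hP : (P : Subgroup G) ≤ H) :
    R ≤ H := by
  obtain ⟨Q, hRQ⟩ := hR.exists_le_sylow
  obtain ⟨g, rfl⟩ := MulAction.exists_smul_eq G P Q
  refine hRQ.trans ?_
  rw [Sylow.coe_subgroup_smul, ← Normal.conj_smul_eq_self g H]
  exact pointwise_smul_le_pointwise_smul_iff.2 hP

/-- An isobicyclic group without the condition `⟨x⟩ ∩ ⟨y⟩ = 1`, which is not inherited by
quotients. -/
structure IsSwapBicyclic (x y : G) (α : G ≃* G) : Prop where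
  zpowers_mul_zpowers : (zpowers x : Set G) * (zpowers y : Set G) = Set.univ
  apply_left : α x = y
  apply_right : α y = x

namespace IsSwapBicyclic

variable {x y : G} {α : G ≃* G}

theorem orderOf_eq (h : IsSwapBicyclic x y α) : orderOf x = orderOf y := by
  rw [← h.apply_left, MulEquiv.orderOf_eq]

theorem closure_pair_eq_top (h : IsSwapBicyclic x y α) : closure {x, y} = ⊤ := by
  refine eq_top_iff.2 fun g _ => ?_
  obtain ⟨a, ha, b, hb, rfl⟩ : g ∈ (zpowers x : Set G) * (zpowers y : Set G) :=
    h.zpowers_mul_zpowers ▸ Set.mem_univ g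
  exact mul_mem (zpowers_le.2 (subset_closure (by simp)) ha)
    (zpowers_le.2 (subset_closure (by simp)) hb)

theorem comp_self (h : IsSwapBicyclic x y α) : (α : G →* G).comp α = MonoidHom.id G :=
  MonoidHom.eq_of_eqOn_dense h.closure_pair_eq_top <| by
    rintro _ (rfl | rfl) <;> simp [h.apply_left, h.apply_right]

theorem map_eq_of_map_le (h : IsSwapBicyclic x y α) {H : Subgroup G}
    (hH : H.map (α : G →* G) ≤ H) : H.map (α : G →* G) = H := by
  refine le_antisymm hH ?_
  calc H = (H.map (α : G →* G)).map (α : G →* G) := by rw [map_map, h.comp_self, map_id]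
    _ ≤ H.map (α : G →* G) := map_mono hH

theorem normal_of_mem_normalizer (h : IsSwapBicyclic x y α) {H : Subgroup G}
    (hx : x ∈ normalizer (H : Set G)) (hy : y ∈ normalizer (H : Set G)) : H.Normal := by
  rw [← normalizer_eq_top_iff, eq_top_iff, ← h.closure_pair_eq_top, closure_le]
  rintro _ (rfl | rfl)
  exacts [hx, hy]

theorem index_zpowers_right_le [Finite G] (h : IsSwapBicyclic x y α) :
    (zpowers y).index ≤ orderOf x := by
  rw [← Nat.card_zpowers]
  refine Nat.card_le_card_of_surjective (fun a : zpowers x => ((a : G) : G ⧸ zpowers y)) ?_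
  refine QuotientGroup.mk_surjective.forall.2 fun g => ?_
  obtain ⟨a, ha, b, hb, rfl⟩ : g ∈ (zpowers x : Set G) * (zpowers y : Set G) :=
    h.zpowers_mul_zpowers ▸ Set.mem_univ g
  exact ⟨⟨a, ha⟩, QuotientGroup.eq.2 (by simpa using hb)⟩

theorem exists_ne_bot_le_zpowers_normal [Finite G] [Nontrivial G] (h : IsSwapBicyclic x y α) :
    ∃ D : Subgroup G, D ≠ ⊥ ∧ D ≤ zpowers y ∧ D.Normal := by
  by_cases hx : x ∈ zpowers y
  · have htop : zpowers y = ⊤ := by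
      rw [eq_top_iff, ← h.closure_pair_eq_top, closure_le]
      rintro _ (rfl | rfl)
      exacts [hx, mem_zpowers _]
    exact ⟨zpowers y, htop ▸ bot_ne_top.symm, le_rfl, htop ▸ inferInstance⟩
  set D := zpowers y ⊓ (zpowers y).comap (MulAut.conj x⁻¹).toMonoidHom
  have hD : D ≠ ⊥ := inf_comap_conj_ne_bot hx (by
    simpa [← h.orderOf_eq] using h.index_zpowers_right_le)
  have hDy : D ≤ zpowers y := inf_le_left
  refine ⟨D, hD, hDy, h.normal_of_mem_normalizer ?_ ?_⟩
  · -- the cyclic group `⟨y⟩` has only one subgroup of each order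
    have hconj : D.map (MulAut.conj x⁻¹).toMonoidHom = D := by
      refine eq_of_le_zpowers_of_card_eq ?_ hDy (card_map_of_injective (MulEquiv.injective _))
      rintro _ ⟨d, hd, rfl⟩
      exact hd.2
    refine inv_inv x ▸ inv_mem (mem_normalizer_fintype fun d hd => ?_)
    rw [← hconj]
    exact ⟨d, hd, by simp⟩
  · refine mem_normalizer_fintype fun d hd => ?_
    obtain ⟨k, rfl⟩ := mem_zpowers_iff.1 (hDy hd)
    rwa [(Commute.self_zpow y k).eq, mul_inv_cancel_right]

theorem exists_prime_orderOf_zpowers_normal [Finite G] [Nontrivial G]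
    (h : IsSwapBicyclic x y α) : ∃ w : G, (orderOf w).Prime ∧ (zpowers w).Normal := by
  obtain ⟨D, hD, hDy, hDn⟩ := h.exists_ne_bot_le_zpowers_normal
  obtain ⟨k, rfl⟩ := (le_zpowers_iff y D).1 hDy
  obtain ⟨q, hq, hqd⟩ := Nat.exists_prime_and_dvd ((Subgroup.card_eq_one.not).2 hD)
  have := Fact.mk hq
  obtain ⟨w, hw⟩ := exists_prime_orderOf_dvd_card' q hqd
  exact ⟨w, by rwa [orderOf_coe, hw], hDn.of_le_zpowers (zpowers_le.2 w.2)⟩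

theorem quotient (h : IsSwapBicyclic x y α) (M : Subgroup G) [M.Normal]
    (hM : M.map (α : G →* G) = M) :
    IsSwapBicyclic (x : G ⧸ M) (y : G ⧸ M) (QuotientGroup.congr M M α hM) where
  zpowers_mul_zpowers := by
    rw [← QuotientGroup.mk'_apply, ← QuotientGroup.mk'_apply, ← MonoidHom.map_zpowers,
      ← MonoidHom.map_zpowers, coe_map, coe_map, ← Set.image_mul, h.zpowers_mul_zpowers,
      Set.image_univ_of_surjective (QuotientGroup.mk'_surjective M)]
  apply_left := by rw [QuotientGroup.congr_mk, h.apply_left]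
  apply_right := by rw [QuotientGroup.congr_mk, h.apply_right]

theorem exists_normal_isPGroup [Finite G] [Nontrivial G] (h : IsSwapBicyclic x y α) :
    ∃ (q : ℕ) (M : Subgroup G), q.Prime ∧ M ≠ ⊥ ∧ M.Normal ∧ M.map (α : G →* G) = M ∧
      IsPGroup q M ∧ ∀ {p : ℕ} [Fact p.Prime] (P : Subgroup G), IsPGroup p P → q < p →
        M ≤ centralizer (P : Set G) := by
  obtain ⟨w, hw, hN⟩ := h.exists_prime_orderOf_zpowers_normal
  have hN' : (zpowers (α w)).Normal := by
    have := hN.map (α : G →* G) α.surjective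
    rwa [MonoidHom.map_zpowers] at this
  have hwα : orderOf (α w) = orderOf w := MulEquiv.orderOf_eq α w
  have hNq : IsPGroup (orderOf w) (zpowers w) := .of_card (n := 1) (by simp)
  have hN'q : IsPGroup (orderOf w) (zpowers (α w)) := .of_card (n := 1) (by simp [hwα])
  refine ⟨orderOf w, zpowers w ⊔ zpowers (α w), hw, ?_, inferInstance, ?_,
    hNq.to_sup_of_normal_right hN'q, fun P hP hlt => ?_⟩
  · refine fun hbot => hw.ne_one ?_
    rw [orderOf_eq_one_iff, ← mem_bot, ← hbot]
    exact mem_sup_left (mem_zpowers w)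
  · have hαα : α (α w) = w := DFunLike.congr_fun h.comp_self w
    rw [Subgroup.map_sup, MonoidHom.map_zpowers, MonoidHom.map_zpowers, MonoidHom.coe_coe, hαα,
      sup_comm]
  · exact sup_le (le_centralizer_iff.1 (hP.le_centralizer_zpowers hw hlt))
      (le_centralizer_iff.1 (hP.le_centralizer_zpowers (hwα ▸ hw) (hwα ▸ hlt)))

theorem sylow_normal_of_forall_prime_le [Finite G] (h : IsSwapBicyclic x y α) {p : ℕ}
    [Fact p.Prime] (hp : ∀ q : ℕ, q.Prime → q ∣ Nat.card G → q ≤ p) (P : Sylow p G) :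
    (P : Subgroup G).Normal := by
  induction hc : Nat.card G using Nat.strong_induction_on generalizing G with
  | _ c ih =>
  rcases subsingleton_or_nontrivial G with hG | hG
  · exact ⟨fun n hn g => by rwa [Subsingleton.elim (g * n * g⁻¹) n]⟩
  obtain ⟨q, M, hq, hM1, hMn, hMα, hMq, hMc⟩ := h.exists_normal_isPGroup
  have := Fact.mk hq
  have hqM : q ∣ Nat.card M := hMq.card_eq_or_dvd.resolve_left (card_eq_one.not.2 hM1)
  have hcardM : Nat.card M * M.index = c := hc ▸ M.card_mul_index
  have hlt : M.index < c := by
    rw [← hcardM]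
    exact lt_mul_left (Nat.pos_of_ne_zero M.index_ne_zero_of_finite)
      (hq.one_lt.trans_le (Nat.le_of_dvd Nat.card_pos hqM))
  have hPM : ((P : Subgroup G) ⊔ M).Normal := by
    have := (ih _ hlt (h.quotient M hMα)
      (fun r hr hrd => hp r hr (hrd.trans (M.index_dvd_card))) (P.mapSurjective
        (QuotientGroup.mk'_surjective M)) rfl).comap (QuotientGroup.mk' M)
    rwa [Sylow.coe_mapSurjective, comap_map_eq, QuotientGroup.ker_mk'] at this
  rcases (hp q hq (hqM.trans (card_subgroup_dvd_card M))).eq_or_lt with rfl | hqp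
  · rwa [sup_eq_left.2 (hMq.le_sylow_of_normal P)] at hPM
  · -- Frattini argument
    have hle : (P : Subgroup G) ⊔ M ≤ normalizer (P : Set G) :=
      sup_le le_normalizer ((hMc P P.2 hqp).trans (centralizer_le_normalizer _))
    rw [← normalizer_eq_top_iff, ← P.normalizer_sup_eq_top' (le_sup_left (b := M)),
      sup_eq_left.2 hle]
    rfl

theorem sup_sylow_normal [Finite G] (h : IsSwapBicyclic x y α) {K : Subgroup G} [K.Normal]
    (hK : K.map (α : G →* G) = K) {p : ℕ} [Fact p.Prime]
    (hp : ∀ q : ℕ, q.Prime → q ∣ K.index → q ≤ p) (P : Sylow p G) :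
    (K ⊔ P).Normal ∧ (K ⊔ P).map (α : G →* G) = K ⊔ P := by
  have hKP : (K ⊔ P).Normal := by
    have := ((h.quotient K hK).sylow_normal_of_forall_prime_le hp
      (P.mapSurjective (QuotientGroup.mk'_surjective K))).comap (QuotientGroup.mk' K)
    rwa [Sylow.coe_mapSurjective, comap_map_eq, QuotientGroup.ker_mk', sup_comm] at this
  refine ⟨hKP, h.map_eq_of_map_le ?_⟩
  rw [Subgroup.map_sup, hK]
  exact sup_le le_sup_left ((P.2.map _).le_of_sylow_le_normal P le_sup_right)

theorem exists_normal_eq_prod_take [Finite G] (h : IsSwapBicyclic x y α) {l : ℕ}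
    {p : Fin l → ℕ} (hprime : ∀ i, (p i).Prime)
    (hall : ∀ q : ℕ, q.Prime → q ∣ Nat.card G → ∃ i, q = p i) (hp : StrictAnti p)
    (P : (i : Fin l) → Sylow (p i) G) (k : ℕ) (hk : k ≤ l) :
    ∃ K : Subgroup G, K.Normal ∧ K.map (α : G →* G) = K ∧ (∀ i : Fin l, i < k → P i ≤ K) ∧
      (K : Set G) =
        (((List.finRange l).take k).map fun i => ((P i : Subgroup G) : Set G)).prod := by
  induction k with
  | zero => exact ⟨⊥, inferInstance, map_bot _, fun i hi => absurd hi (Nat.not_lt_zero _),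
      by simp [Set.singleton_one]⟩
  | succ k ih =>
  obtain ⟨K, hKn, hKα, hKP, hK⟩ := ih (Nat.le_of_succ_le hk)
  set i : Fin l := ⟨k, hk⟩
  have := Fact.mk (hprime i)
  have hpi : ∀ q : ℕ, q.Prime → q ∣ K.index → q ≤ p i := by
    intro q hq hqK
    obtain ⟨j, rfl⟩ := hall q hq (hqK.trans K.index_dvd_card)
    refine hp.antitone (not_lt.1 fun hji => ?_)
    have := Fact.mk (hprime j)
    exact (P j).not_dvd_index (hqK.trans (index_dvd_of_le (hKP j hji)))
  obtain ⟨hKPn, hKPα⟩ := h.sup_sylow_normal hKα hpi (P i)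
  refine ⟨K ⊔ P i, hKPn, hKPα, fun j hj => ?_, ?_⟩
  · rcases (Nat.lt_succ_iff_lt_or_eq.1 hj) with hj | hj
    · exact (hKP j hj).trans le_sup_left
    · exact (Fin.ext hj : j = i) ▸ le_sup_right
  · rw [normal_mul, hK, List.take_add_one, List.getElem?_eq_getElem (by simpa using hk),
      List.getElem_finRange]
    simp [i]

end IsSwapBicyclic

end

theorem isobicyclic_sylowProd_normal_general
    {G : Type*} [Group G] [Finite G] (n : ℕ) (x y : G)
    (hx : orderOf x = n) (hy : orderOf y = n)
    (hprod : (↑(Subgroup.zpowers x) * ↑(Subgroup.zpowers y) : Set G) = Set.univ)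
    (hinter : Subgroup.zpowers x ⊓ Subgroup.zpowers y = ⊥)
    (α : G ≃* G) (hαx : α x = y) (hαy : α y = x)
    (l : ℕ) (p : Fin l → ℕ)
    (hprime : ∀ i, (p i).Prime)
    (hall : ∀ q : ℕ, q.Prime → q ∣ n → ∃ i, q = p i)
    (hdec : ∀ i j : Fin l, i < j → p j < p i)
    (P : (i : Fin l) → Sylow (p i) G) :
    ∀ i : Fin l, ∃ N : Subgroup G, N.Normal ∧
      (N : Set G) =
        (((List.finRange l).take (i + 1)).map fun j => ((P j : Subgroup G) : Set G)).prod := by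
  have hcard : Nat.card G = n * n := by
    rw [← (isComplement'_of_disjoint_and_mul_eq_univ (disjoint_iff.2 hinter) hprod).card_mul_card,
      Nat.card_zpowers, Nat.card_zpowers, hx, hy]
  have hallG : ∀ q : ℕ, q.Prime → q ∣ Nat.card G → ∃ i, q = p i := fun q hq hqG =>
    hall q hq ((hq.dvd_mul.1 (hcard ▸ hqG)).elim id id)
  intro i
  obtain ⟨N, hN, -, -, hNP⟩ := IsSwapBicyclic.exists_normal_eq_prod_take ⟨hprod, hαx, hαy⟩
    hprime hallG hdec P (i + 1) i.isLt
  exact ⟨N, hN, hNP⟩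

/-- If `G` is `n`-isobicyclic, `p 0 > p 1 > ⋯ > p (l-1)` are the distinct
primes dividing `n` in decreasing order, and `P i` is a Sylow `p i`-subgroup for each `i`,
then each set product `N_i = P 0 · P 1 ⋯ P i` is a normal subgroup of `G`. -/
theorem isobicyclic_sylowProd_normal
    {G : Type*} [Group G] [Finite G] (n : ℕ) (hn : 0 < n) (x y : G)
    (hx : orderOf x = n) (hy : orderOf y = n)
    (hprod : (↑(Subgroup.zpowers x) * ↑(Subgroup.zpowers y) : Set G) = Set.univ)
    (hinter : Subgroup.zpowers x ⊓ Subgroup.zpowers y = ⊥)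
    (α : G ≃* G) (hαx : α x = y) (hαy : α y = x)
    (l : ℕ) (p : Fin l → ℕ)
    (hprime : ∀ i, (p i).Prime) (hdvd : ∀ i, p i ∣ n)
    (hall : ∀ q : ℕ, q.Prime → q ∣ n → ∃ i, q = p i)
    (hdec : ∀ i j : Fin l, i < j → p j < p i)
    (P : (i : Fin l) → Sylow (p i) G) :
    ∀ i : Fin l, ∃ N : Subgroup G, N.Normal ∧
      (N : Set G) =
        (((List.finRange l).take (i + 1)).map fun j => ((P j : Subgroup G) : Set G)).prod :=
  isobicyclic_sylowProd_normal_general n x y hx hy hprod hinter α hαx hαy l p hprime hall hdec P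
end

section
/- Let p be a prime, let P be a finite p-group, and let A be a subgroup of Aut(P) whose order is not divisible by p. Then the natural homomorphism from A to Aut(P/Φ(P)) induced by reduction modulo the Frattini subgroup Φ(P) is injective; in other words, any p'-group of automorphisms of P is represented faithfully on P/Φ(P). -/
/-!
An automorphism `ψ` of prime order `q ∤ |P|` acting trivially on `P/Φ(P)` stabilises every
coset `Φ(P) g`; its orbits there have size `1` or `q` while the coset has size prime to `q`,
so every coset contains a fixed point of `ψ`. Hence the centraliser of `ψ` together with `Φ(P)`
generates `P`, and since `Φ(P)` consists of non-generators, `ψ` is trivial. An automorphism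
of order prime to `|P|` that is nontrivial would have a power of prime order of this kind.
-/

namespace MulAut

variable {P : Type*} [Group P]

def trivialMod (N : Subgroup P) : Subgroup (MulAut P) where
  carrier := {χ | ∀ g, χ g * g⁻¹ ∈ N}
  one_mem' g := by simp
  mul_mem' {χ₁ χ₂} h₁ h₂ g := by
    simpa [mul_assoc] using N.mul_mem (h₁ (χ₂ g)) (h₂ g)
  inv_mem' {χ} h g := by
    simpa using N.inv_mem (h (χ⁻¹ g))

theorem mem_trivialMod {N : Subgroup P} {χ : MulAut P} :
    χ ∈ trivialMod N ↔ ∀ g, χ g * g⁻¹ ∈ N :=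
  Iff.rfl

variable {N : Subgroup P} [N.Characteristic] {Q : Subgroup (MulAut P)}

def rightCosetSubMulAction (hQ : Q ≤ trivialMod N) (g : P) : SubMulAction Q P where
  carrier := {x | x * g⁻¹ ∈ N}
  smul_mem' ψ x hx := by
    have hψ : (ψ : MulAut P) (x * g⁻¹) * ((ψ : MulAut P) g * g⁻¹) ∈ N :=
      N.mul_mem (Subgroup.characteristic_iff_le_comap.mp ‹_› (ψ : MulAut P) hx) (hQ ψ.2 g)
    simpa [mul_assoc, Subgroup.smul_def, MulAut.smul_def] using hψ

theorem exists_fixed_mem_rightCoset {q : ℕ} [Fact q.Prime] (hQq : IsPGroup q Q)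
    (hqN : ¬ q ∣ Nat.card N) (hQ : Q ≤ trivialMod N) (g : P) :
    ∃ n ∈ N, ∀ ψ ∈ Q, ψ (n * g) = n * g := by
  have hcard : Nat.card (rightCosetSubMulAction hQ g) = Nat.card N :=
    Nat.card_congr (Equiv.subtypeEquiv (Equiv.mulRight g⁻¹) fun _ => Iff.rfl)
  obtain ⟨⟨x, hx⟩, hfix⟩ :=
    hQq.nonempty_fixed_point_of_prime_not_dvd_card (rightCosetSubMulAction hQ g) (hcard ▸ hqN)
  refine ⟨x * g⁻¹, hx, fun ψ hψ => ?_⟩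
  simpa using congrArg Subtype.val (hfix ⟨ψ, hψ⟩)

theorem fixedPoints_sup_eq_top {q : ℕ} [Fact q.Prime] (hQq : IsPGroup q Q)
    (hqN : ¬ q ∣ Nat.card N) (hQ : Q ≤ trivialMod N) : FixedPoints.subgroup Q P ⊔ N = ⊤ := by
  refine eq_top_iff.mpr fun g _ => ?_
  obtain ⟨n, hn, hfix⟩ := exists_fixed_mem_rightCoset hQq hqN hQ g
  have hng : n * g ∈ FixedPoints.subgroup Q P := fun ψ => hfix ψ ψ.2
  simpa using mul_mem (Subgroup.mem_sup_right (N.inv_mem hn)) (Subgroup.mem_sup_left hng)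

theorem eq_bot_of_le_trivialMod_frattini [Finite P] {q : ℕ} [Fact q.Prime]
    (hQq : IsPGroup q Q) (hqP : ¬ q ∣ Nat.card P) (hQ : Q ≤ trivialMod (frattini P)) :
    Q = ⊥ := by
  have hqΦ : ¬ q ∣ Nat.card (frattini P) :=
    fun h => hqP (h.trans (Subgroup.card_subgroup_dvd_card _))
  have htop := frattini_nongenerating (fixedPoints_sup_eq_top hQq hqΦ hQ)
  refine eq_bot_iff.mpr fun ψ hψ => ?_
  ext g
  exact (htop ▸ Subgroup.mem_top g : g ∈ FixedPoints.subgroup Q P) ⟨ψ, hψ⟩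

theorem eq_one_of_mem_trivialMod_frattini [Finite P] {φ : MulAut P}
    (hφ : φ ∈ trivialMod (frattini P)) (hcop : (orderOf φ).Coprime (Nat.card P)) : φ = 1 := by
  by_contra hne
  obtain ⟨q, hq, hqφ⟩ := Nat.exists_prime_and_dvd (orderOf_eq_one_iff.not.mpr hne)
  have := Fact.mk hq
  have hψ : orderOf (φ ^ (orderOf φ / q)) = q := orderOf_pow_orderOf_div (orderOf_pos φ).ne' hqφ
  have hQq : IsPGroup q (Subgroup.zpowers (φ ^ (orderOf φ / q))) :=
    IsPGroup.of_card (by rw [Nat.card_zpowers, hψ, pow_one])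
  have hqP : ¬ q ∣ Nat.card P := fun h => hq.not_dvd_one (hcop ▸ Nat.dvd_gcd hqφ h)
  have hbot := eq_bot_of_le_trivialMod_frattini hQq hqP
    (Subgroup.zpowers_le.mpr (pow_mem hφ _))
  rw [Subgroup.zpowers_eq_bot, ← orderOf_eq_one_iff, hψ] at hbot
  exact hq.ne_one hbot

end MulAut

/-- Hall. If `P` is a finite `p`-group and `A ≤ Aut P` has order coprime
to `p`, then `A` acts faithfully on `P/Φ(P)`: any `φ ∈ A` inducing the identity automorphism
modulo the Frattini subgroup (i.e. with `φ g ≡ g mod Φ(P)` for all `g`) is the identity. -/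
theorem pGroup_coprime_automorphisms_faithful_on_frattini_quotient
    {P : Type*} [Group P] [Finite P] (p : ℕ) (hp : p.Prime) (hP : IsPGroup p P)
    (A : Subgroup (MulAut P)) (hA : (Nat.card A).Coprime p) :
    ∀ φ ∈ A, (∀ g : P, φ g * g⁻¹ ∈ frattini P) → φ = 1 := by
  intro φ hφA hφ
  have := Fact.mk hp
  obtain ⟨n, hn⟩ := hP.exists_card_eq
  refine MulAut.eq_one_of_mem_trivialMod_frattini (MulAut.mem_trivialMod.mpr hφ) ?_
  rw [hn]
  exact (Nat.Coprime.coprime_dvd_left (Subgroup.orderOf_dvd_natCard A hφA) hA).pow_right n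
end

section
/- Let p be a prime, let d ≥ 1, and let κ, λ be elements of Z/p^d Z with λ a unit. Let M_x be the 2×2 matrix with rows (1, 0) and (κ, λ), and let M_y be the 2×2 matrix with rows (λ, κ) and (0, 1); both are invertible over Z/p^d Z. Let A be the subgroup of GL₂(Z/p^d Z) generated by M_x and M_y, and suppose that the order of A is coprime to p. Then the following are equivalent: (a) A is abelian; (b) κ = 0; (c) κ is divisible by p in Z/p^d Z (i.e. κ lies in the ideal generated by p). -/
/-!
Every element of `GL₂(ℤ/p^d)` congruent to `1` modulo `p` has order dividing `p^d`, so it is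
trivial in a subgroup of order prime to `p`. The matrices `M_x` and `M_y` commute iff
`κ² = 0` and `(λ - 1) κ = 0`. Suppose `p ∣ κ`. If moreover `p ∣ λ - 1`, then `M_y ≡ 1`, so
`M_y = 1` and `κ = 0`. Otherwise `λ - 1` is a unit, and the commutator of `M_x` and `M_y`,
being `≡ 1`, is trivial, whence `(λ - 1) κ = 0` gives `κ = 0`. Conversely, if `A` is abelian
then `κ² = 0`, so `κ` is not a unit of the local ring `ℤ/p^d`, that is, `p ∣ κ`.
-/

open Matrix

theorem one_add_nsmul_pow_pow_eq_one {R : Type*} [Ring R] {p d : ℕ} (hR : (p : R) ^ d = 0)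
    (N : R) : (1 + p • N) ^ p ^ d = 1 := by
  -- `R` need not be commutative: compute in `ℤ[X]` and evaluate at `N`.
  obtain ⟨Q, hQ⟩ : (p : Polynomial ℤ) ^ (d + 1) ∣ (1 + p • Polynomial.X) ^ p ^ d - 1 ^ p ^ d :=
    dvd_sub_pow_of_dvd_sub (by simp [nsmul_eq_mul]) d
  have := congrArg (Polynomial.aeval N) hQ
  simp only [map_sub, map_pow, map_add, map_one, map_nsmul, Polynomial.aeval_X, map_mul,
    map_natCast, one_pow] at this
  rwa [sub_eq_iff_eq_add, pow_succ, hR, zero_mul, zero_mul, zero_add] at this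

theorem Subgroup.eq_one_of_pow_eq_one_of_coprime_card {G : Type*} [Group G] {H : Subgroup G}
    {n : ℕ} (hH : (Nat.card H).Coprime n) {g : G} (hg : g ∈ H) (hgn : g ^ n = 1) : g = 1 :=
  orderOf_eq_one_iff.mp <| (hH.coprime_dvd_left (H.orderOf_dvd_natCard hg)).eq_one_of_dvd
    (orderOf_dvd_of_pow_eq_one hgn)

theorem Units.eq_one_of_val_eq_one_add_nsmul {R : Type*} [Ring R] {p d : ℕ}
    (hR : (p : R) ^ d = 0) {H : Subgroup Rˣ} (hH : (Nat.card H).Coprime p) {g : Rˣ} (hg : g ∈ H)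
    {N : R} (hgN : (g : R) = 1 + p • N) : g = 1 :=
  H.eq_one_of_pow_eq_one_of_coprime_card (hH.pow_right d) hg <|
    Units.ext <| by rw [Units.val_pow_eq_pow_val, hgN, one_add_nsmul_pow_pow_eq_one hR, val_one]

theorem Subgroup.commute_of_mem_closure_pair {G : Type*} [Group G] {x y : G} (hxy : Commute x y)
    {a b : G} (ha : a ∈ closure {x, y}) (hb : b ∈ closure {x, y}) : Commute a b := by
  have hpair : ∀ s ∈ ({x, y} : Set G), ∀ t ∈ ({x, y} : Set G), s * t = t * s := by
    rintro s (rfl | rfl) t (rfl | rfl)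
    exacts [rfl, hxy, hxy.symm, rfl]
  exact Set.centralizer_centralizer_comm_of_comm hpair a
    (closure_le_centralizer_centralizer _ ha) b (closure_le_centralizer_centralizer _ hb)

theorem ZMod.isUnit_of_not_natCast_dvd {p d : ℕ} (hp : p.Prime) {x : ZMod (p ^ d)}
    (hx : ¬ (p : ZMod (p ^ d)) ∣ x) : IsUnit x := by
  have : NeZero (p ^ d) := ⟨pow_ne_zero d hp.ne_zero⟩
  rw [← ZMod.natCast_zmod_val x, ZMod.isUnit_iff_coprime]
  refine Nat.Coprime.pow_right d <| Nat.Coprime.symm <|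
    (hp.coprime_iff_not_dvd).mpr fun h => hx ?_
  simpa using Nat.cast_dvd_cast (α := ZMod (p ^ d)) h

theorem Matrix.natCast_pow_eq_zero (p d : ℕ) (n : Type*) [Fintype n] [DecidableEq n] :
    (p : Matrix n n (ZMod (p ^ d))) ^ d = 0 := by
  rw [← Nat.cast_pow, ← map_natCast (scalar n), ZMod.natCast_self, map_zero]

theorem Matrix.commute_fin_two_triangular_iff {R : Type*} [CommRing R] (κ l : R) :
    Commute !![1, 0; κ, l] !![l, κ; 0, 1] ↔ κ * κ = 0 ∧ (l - 1) * κ = 0 := by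
  rw [Commute, SemiconjBy, mul_fin_two, mul_fin_two, ← Matrix.ext_iff]
  simp only [Fin.forall_fin_two, of_apply, cons_val', cons_val_zero, cons_val_one, empty_val',
    cons_val_fin_one]
  constructor
  · rintro ⟨⟨h00, h01⟩, -⟩
    exact ⟨by linear_combination -h00, by linear_combination -h01⟩
  · rintro ⟨hsq, hl⟩
    exact ⟨⟨by linear_combination -hsq, by linear_combination -hl⟩,
      by linear_combination hl, by linear_combination hsq⟩

theorem eq_zero_of_natCast_dvd_of_coprime_card {p d : ℕ} (hp : p.Prime) {κ l : ZMod (p ^ d)}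
    {Mx My : GL (Fin 2) (ZMod (p ^ d))} (hMx : (Mx : Matrix (Fin 2) (Fin 2) _) = !![1, 0; κ, l])
    (hMy : (My : Matrix (Fin 2) (Fin 2) _) = !![l, κ; 0, 1])
    (hA : (Nat.card (Subgroup.closure {Mx, My})).Coprime p) (hκ : (p : ZMod (p ^ d)) ∣ κ) :
    κ = 0 := by
  have hR := natCast_pow_eq_zero p d (Fin 2)
  obtain ⟨v, rfl⟩ := hκ
  by_cases hl : (p : ZMod (p ^ d)) ∣ l - 1
  · obtain ⟨u, hu⟩ := hl
    have hMy1 : My = 1 := by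
      refine Units.eq_one_of_val_eq_one_add_nsmul hR hA (Subgroup.subset_closure (by simp))
        (N := !![u, v; 0, 0]) ?_
      rw [hMy, eq_add_of_sub_eq hu, one_fin_two]
      ext i j
      fin_cases i <;> fin_cases j <;> simp [nsmul_eq_mul, add_comm]
    rw [hMy1, Units.val_one] at hMy
    simpa using (congr_fun₂ hMy 0 1).symm
  · have hMxA : Mx ∈ Subgroup.closure {Mx, My} := Subgroup.subset_closure (by simp)
    have hMyA : My ∈ Subgroup.closure {Mx, My} := Subgroup.subset_closure (by simp)
    have hdiff : (Mx * My - My * Mx : Matrix (Fin 2) (Fin 2) (ZMod (p ^ d))) =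
        p • v • !![-(p * v), 1 - l; l - 1, p * v] := by
      rw [hMx, hMy, mul_fin_two, mul_fin_two]
      ext i j
      fin_cases i <;> fin_cases j <;> simp [nsmul_eq_mul] <;> ring
    have hcommutator : ((Mx * My * (My * Mx)⁻¹ : GL (Fin 2) (ZMod (p ^ d))) :
        Matrix (Fin 2) (Fin 2) (ZMod (p ^ d))) =
        1 + p • (v • !![-(p * v), 1 - l; l - 1, p * v] *
          ((My * Mx)⁻¹ : GL (Fin 2) (ZMod (p ^ d))).val) := by
      rw [← smul_mul_assoc, ← hdiff, sub_mul, ← Units.val_mul My Mx, Units.mul_inv,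
        add_sub_cancel, Units.val_mul, Units.val_mul]
    have hcomm : Commute Mx My := mul_inv_eq_one.mp <| Units.eq_one_of_val_eq_one_add_nsmul hR hA
      (mul_mem (mul_mem hMxA hMyA) (inv_mem (mul_mem hMyA hMxA))) hcommutator
    rw [← Commute.units_val_iff, hMx, hMy, commute_fin_two_triangular_iff] at hcomm
    exact (ZMod.isUnit_of_not_natCast_dvd hp hl).mul_right_eq_zero.mp hcomm.2

theorem diagonal_action_lemma_general
    (p d : ℕ) (hp : p.Prime)
    (κ lam : ZMod (p ^ d))
    (Mx My : Matrix.GeneralLinearGroup (Fin 2) (ZMod (p ^ d)))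
    (hMx : (Mx : Matrix (Fin 2) (Fin 2) (ZMod (p ^ d))) = !![1, 0; κ, lam])
    (hMy : (My : Matrix (Fin 2) (Fin 2) (ZMod (p ^ d))) = !![lam, κ; 0, 1])
    (hA : (Nat.card (Subgroup.closure ({Mx, My} :
      Set (Matrix.GeneralLinearGroup (Fin 2) (ZMod (p ^ d))))) ).Coprime p) :
    ((∀ a ∈ Subgroup.closure ({Mx, My} :
        Set (Matrix.GeneralLinearGroup (Fin 2) (ZMod (p ^ d)))),
      ∀ b ∈ Subgroup.closure ({Mx, My} :
        Set (Matrix.GeneralLinearGroup (Fin 2) (ZMod (p ^ d)))),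
      a * b = b * a) ↔ κ = 0) ∧
    (κ = 0 ↔ (p : ZMod (p ^ d)) ∣ κ) := by
  have hcomm_iff : Commute Mx My ↔ κ * κ = 0 ∧ (lam - 1) * κ = 0 := by
    rw [← Commute.units_val_iff, hMx, hMy, commute_fin_two_triangular_iff]
  have hdvd : (p : ZMod (p ^ d)) ∣ κ → κ = 0 :=
    eq_zero_of_natCast_dvd_of_coprime_card hp hMx hMy hA
  refine ⟨⟨fun habel => hdvd ?_, fun hκ a ha b hb => ?_⟩, ⟨fun hκ => hκ ▸ dvd_zero _, hdvd⟩⟩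
  · obtain ⟨hsq, -⟩ := hcomm_iff.mp <| habel Mx (Subgroup.subset_closure (by simp))
      My (Subgroup.subset_closure (by simp))
    by_contra hndvd
    rw [(ZMod.isUnit_of_not_natCast_dvd hp hndvd).mul_right_eq_zero.mp hsq] at hndvd
    exact hndvd (dvd_zero _)
  · exact Subgroup.commute_of_mem_closure_pair (hcomm_iff.mpr (by simp [hκ])) ha hb

/-- Lemma 7.1. Let `p` be prime, `d ≥ 1`, and `κ, λ ∈ Z/p^dZ` with `λ` a
unit. Let `A ≤ GL₂(Z/p^dZ)` be generated by `M_x = [[1,0],[κ,λ]]` and `M_y = [[λ,κ],[0,1]]`,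
and suppose `|A|` is coprime to `p`. Then: `A` is abelian ↔ `κ = 0` ↔ `p ∣ κ`. -/
theorem diagonal_action_lemma
    (p d : ℕ) (hp : p.Prime) (hd : 1 ≤ d)
    (κ lam : ZMod (p ^ d)) (hlam : IsUnit lam)
    (Mx My : Matrix.GeneralLinearGroup (Fin 2) (ZMod (p ^ d)))
    (hMx : (Mx : Matrix (Fin 2) (Fin 2) (ZMod (p ^ d))) = !![1, 0; κ, lam])
    (hMy : (My : Matrix (Fin 2) (Fin 2) (ZMod (p ^ d))) = !![lam, κ; 0, 1])
    (hA : (Nat.card (Subgroup.closure ({Mx, My} :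
      Set (Matrix.GeneralLinearGroup (Fin 2) (ZMod (p ^ d))))) ).Coprime p) :
    ((∀ a ∈ Subgroup.closure ({Mx, My} :
        Set (Matrix.GeneralLinearGroup (Fin 2) (ZMod (p ^ d)))),
      ∀ b ∈ Subgroup.closure ({Mx, My} :
        Set (Matrix.GeneralLinearGroup (Fin 2) (ZMod (p ^ d)))),
      a * b = b * a) ↔ κ = 0) ∧
    (κ = 0 ↔ (p : ZMod (p ^ d)) ∣ κ) :=
  diagonal_action_lemma_general p d hp κ lam Mx My hMx hMy hA
end

section
/- Let G be an n-isobicyclic group with canonical generators x and y, let p be a prime dividing n with p^e the exact power of p dividing n, and set t = n/p^e. Suppose that the (normal) Sylow p-subgroup P = ⟨x^t, y^t⟩ of G is abelian and normal in G. Then G acts diagonally on P with respect to the canonical basis: there exists an integer λ such that x⁻¹·(y^t)·x = (y^t)^λ and y⁻¹·(x^t)·y = (x^t)^λ (while x centralises x^t and y centralises y^t, since these are powers of x and y respectively). -/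
open scoped Pointwise

private lemma aux_zmod_two (z : ZMod 2) (h : z ≠ 0) : z = 1 := by revert h; revert z; decide

private lemma aux_isUnit_of_cast_ne_zero {p e : ℕ} (hp : p.Prime) (he : e ≠ 0)
    (u : ZMod (p ^ e)) (h : (ZMod.castHom (dvd_pow_self p he) (ZMod p)) u ≠ 0) :
    IsUnit u := by
  haveI : NeZero p := ⟨hp.pos.ne'⟩
  haveI : NeZero (p ^ e) := ⟨pow_ne_zero e hp.pos.ne'⟩
  have hval : ((u.val : ℕ) : ZMod (p ^ e)) = u := ZMod.natCast_rightInverse u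
  have h2 : ((u.val : ℕ) : ZMod p) ≠ 0 := by
    rw [← map_natCast (ZMod.castHom (dvd_pow_self p he) (ZMod p)) u.val, hval]
    exact h
  have h3 : ¬ p ∣ u.val := fun hd => h2 ((ZMod.natCast_eq_zero_iff u.val p).mpr hd)
  have h4 : (u.val).Coprime (p ^ e) :=
    Nat.Coprime.pow_right e ((Nat.Prime.coprime_iff_not_dvd hp).mpr h3).symm
  rw [← hval]
  exact (ZMod.isUnit_iff_coprime _ _).mpr h4

open Finset in
private lemma aux_endgame {p e t : ℕ} (hp : p.Prime) (he : e ≠ 0) (ht0 : t ≠ 0)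
    (hpt : ¬ p ∣ t) (A β : ZMod (p ^ e))
    (hbt : β ^ t = 1)
    (hAt : A * (∑ i ∈ Finset.range t, β ^ i) = 0)
    (hC : ∀ k : ℕ, ∃ j : ℕ,
      β + A ^ 2 * (∑ i ∈ Finset.range k, β ^ i) = β ^ j ∧
      A * β ^ k = A * (∑ i ∈ Finset.range j, β ^ i)) :
    A = 0 := by
  classical
  haveI : NeZero p := ⟨hp.pos.ne'⟩
  haveI : Fact p.Prime := ⟨hp⟩
  haveI : NeZero (p ^ e) := ⟨pow_ne_zero e hp.pos.ne'⟩
  haveI : Fact (1 < p ^ e) := ⟨Nat.one_lt_pow he hp.one_lt⟩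
  set φ : ZMod (p ^ e) →+* ZMod p := ZMod.castHom (dvd_pow_self p he) (ZMod p) with hφ
  have hunit : ∀ u : ZMod (p ^ e), φ u ≠ 0 → IsUnit u :=
    fun u hu => aux_isUnit_of_cast_ne_zero hp he u hu
  have hβu : IsUnit β := IsUnit.of_pow_eq_one hbt ht0
  by_cases hγu : IsUnit (β - 1)
  · -- case 2 : β - 1 is a unit
    have hgeom : ∀ k : ℕ, (β - 1) * (∑ i ∈ Finset.range k, β ^ i) = β ^ k - 1 :=
      fun k => mul_geom_sum β k
    obtain ⟨j1, hc1, hd1⟩ := hC 1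
    rw [show (∑ i ∈ Finset.range 1, β ^ i) = 1 by simp, mul_one] at hc1
    have hE1 : A * ((β - 1) ^ 2 - A ^ 2) = 0 := by
      linear_combination (β - 1) * hd1 + A * hgeom j1 - A * hc1
    by_cases hAu : φ A = 0
    · -- A not a unit: (β-1)^2 - A^2 is a unit
      have hφfac : φ ((β - 1) ^ 2 - A ^ 2) = φ (β - 1) ^ 2 := by
        rw [map_sub, map_pow, map_pow, hAu]; ring
      have hu : IsUnit ((β - 1) ^ 2 - A ^ 2) := by
        refine hunit _ ?_
        rw [hφfac]
        exact pow_ne_zero 2 ((hγu.map φ).ne_zero)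
      exact (hu.mul_left_eq_zero).mp hE1
    · -- A is a unit
      exfalso
      have hAunit : IsUnit A := hunit _ hAu
      have h2 : ((β - 1) - A) * ((β - 1) + A) = 0 := by
        refine (hAunit.mul_right_eq_zero).mp ?_
        linear_combination hE1
      have hφγ : φ (β - 1) ≠ 0 := (hγu.map φ).ne_zero
      have hp2 : p ≠ 2 := by
        rintro rfl
        have h1 : φ β ≠ 0 := (hβu.map φ).ne_zero
        have : φ β = 1 := aux_zmod_two _ h1
        exact hφγ (by rw [map_sub, this, map_one, sub_self])
      have h2p : (2 : ZMod p) ≠ 0 := by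
        intro h0
        rw [show ((2 : ZMod p)) = ((2 : ℕ) : ZMod p) by norm_num] at h0
        have := (ZMod.natCast_eq_zero_iff 2 p).mp h0
        exact hp2 ((Nat.prime_dvd_prime_iff_eq hp Nat.prime_two).mp this)
      have hA2 : A ^ 2 = (β - 1) ^ 2 := by
        by_cases hf : φ ((β - 1) - A) = 0
        · have hne : φ ((β - 1) + A) ≠ 0 := by
            intro h0
            apply hφγ
            have h2γ : (2 : ZMod p) * φ (β - 1) = 0 := by
              have e1 : φ ((β - 1) - A) + φ ((β - 1) + A) = 2 * φ (β - 1) := by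
                rw [map_sub, map_add]; ring
              rw [hf, h0, add_zero] at e1; exact e1.symm
            rcases mul_eq_zero.mp h2γ with h | h
            · exact absurd h h2p
            · exact h
          have hu := hunit _ hne
          have h3 : (β - 1) - A = 0 := (hu.mul_left_eq_zero).mp h2
          have : A = β - 1 := by linear_combination -h3
          rw [this]
        · have hu := hunit _ hf
          have h3 : (β - 1) + A = 0 := (hu.mul_right_eq_zero).mp h2
          have : A = -(β - 1) := by linear_combination h3
          rw [this]; ring
      -- pigeonhole
      have hfin : IsOfFinOrder β := isOfFinOrder_iff_pow_eq_one.mpr ⟨t, Nat.pos_of_ne_zero ht0, hbt⟩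
      have hd0 : 0 < orderOf β := hfin.orderOf_pos
      have hkey : ∀ k : ℕ, ∃ j : ℕ, (1 : ZMod (p ^ e)) + (β - 1) * β ^ k = β ^ j := by
        intro k
        obtain ⟨j, hc, -⟩ := hC k
        refine ⟨j, ?_⟩
        rw [← hc, hA2]
        linear_combination (1 - β) * hgeom k
      set T : Finset (ZMod (p ^ e)) := (Finset.range (orderOf β)).image (fun k => β ^ k) with hT
      set Sf : Finset (ZMod (p ^ e)) := (Finset.range (orderOf β)).image (fun k => 1 + (β - 1) * β ^ k) with hSf
      have hSsub : Sf ⊆ T.erase 1 := by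
        intro s hs
        obtain ⟨k, hk, rfl⟩ := Finset.mem_image.mp hs
        refine Finset.mem_erase.mpr ⟨?_, ?_⟩
        · intro h1
          have hz : (β - 1) * β ^ k = 0 := by linear_combination h1
          exact (hγu.mul (hβu.pow k)).ne_zero hz
        · obtain ⟨j, hj⟩ := hkey k
          refine Finset.mem_image.mpr ⟨j % orderOf β, Finset.mem_range.mpr (Nat.mod_lt _ hd0), ?_⟩
          rw [pow_mod_orderOf]
          exact hj.symm
      have hcardS : Sf.card = orderOf β := by
        rw [hSf, Finset.card_image_of_injOn, Finset.card_range]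
        intro k hk l hl hkl
        have h1 : β ^ k = β ^ l := hγu.mul_left_cancel (by linear_combination hkl)
        exact pow_injOn_Iio_orderOf (Set.mem_Iio.mpr (Finset.mem_range.mp hk))
          (Set.mem_Iio.mpr (Finset.mem_range.mp hl)) h1
      have h1T : (1 : ZMod (p ^ e)) ∈ T := by
        refine Finset.mem_image.mpr ⟨0, Finset.mem_range.mpr hd0, by simp⟩
      have hTcard : T.card ≤ orderOf β := by
        rw [hT]
        have := Finset.card_image_le (s := Finset.range (orderOf β)) (f := fun k => β ^ k)
        rwa [Finset.card_range] at this
      have hcardT : (T.erase 1).card ≤ orderOf β - 1 := by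
        rw [Finset.card_erase_of_mem h1T]
        omega
      have hST : orderOf β ≤ (T.erase 1).card := hcardS ▸ Finset.card_le_card hSsub
      omega
  · -- case 1 : β ≡ 1 mod p
    have hφγ : φ (β - 1) = 0 := by
      by_contra h; exact hγu (hunit _ h)
    have hφβ : φ β = 1 := by
      have := hφγ; rw [map_sub, map_one, sub_eq_zero] at this; exact this
    have hφσ : φ (∑ i ∈ Finset.range t, β ^ i) = (t : ZMod p) := by
      rw [map_sum]
      simp [map_pow, hφβ]
    have hσu : IsUnit (∑ i ∈ Finset.range t, β ^ i) := by
      refine hunit _ ?_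
      rw [hφσ]
      exact fun h0 => hpt ((ZMod.natCast_eq_zero_iff t p).mp h0)
    exact (hσu.mul_left_eq_zero).mp hAt

/-- Proposition 7.2. If `G` is `n`-isobicyclic with canonical generators
`x, y`, `p^e` is the exact power of the prime `p` in `n`, `t = n / p^e`, and the Sylow
`p`-subgroup `P = ⟨x^t, y^t⟩` is abelian and normal in `G`, then `G` acts diagonally on `P`
with respect to the canonical basis `x^t, y^t`: for some integer `λ`, conjugation by `x`
fixes `x^t` and raises `y^t` to the power `λ`, and conjugation by `y` fixes `y^t` and raises
`x^t` to the power `λ`. -/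
theorem isobicyclic_diagonal_action_on_abelian_normal_sylow
    {G : Type*} [Group G] [Finite G] (n : ℕ) (hn : 0 < n) (x y : G)
    (hx : orderOf x = n) (hy : orderOf y = n)
    (hprod : (↑(Subgroup.zpowers x) * ↑(Subgroup.zpowers y) : Set G) = Set.univ)
    (hinter : Subgroup.zpowers x ⊓ Subgroup.zpowers y = ⊥)
    (α : G ≃* G) (hαx : α x = y) (hαy : α y = x)
    (p e t : ℕ) (hp : p.Prime)
    (hpe : p ^ e ∣ n) (hpe' : ¬ p ^ (e + 1) ∣ n) (hpn : p ∣ n)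
    (ht : t = n / p ^ e)
    (hPnormal : (Subgroup.closure ({x ^ t, y ^ t} : Set G)).Normal)
    (hPab : ∀ a ∈ Subgroup.closure ({x ^ t, y ^ t} : Set G),
      ∀ b ∈ Subgroup.closure ({x ^ t, y ^ t} : Set G), a * b = b * a) :
    ∃ lam : ℤ,
      x⁻¹ * y ^ t * x = (y ^ t) ^ lam ∧
      y⁻¹ * x ^ t * y = (x ^ t) ^ lam ∧
      x⁻¹ * x ^ t * x = x ^ t ∧
      y⁻¹ * y ^ t * y = y ^ t := by
  classical
  -- numerics
  have he : e ≠ 0 := by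
    rintro rfl
    exact hpe' (by simpa using hpn)
  have hqn : n = p ^ e * t := by rw [ht, Nat.mul_div_cancel' hpe]
  have ht0 : t ≠ 0 := by rintro rfl; rw [mul_zero] at hqn; omega
  have hpt : ¬ p ∣ t := by
    intro hd
    exact hpe' (by rw [hqn, pow_succ]; exact mul_dvd_mul_left (p ^ e) hd)
  have htn : t ∣ n := ⟨p ^ e, by rw [hqn, mul_comm]⟩
  -- orders
  have hXord : orderOf (x ^ t) = p ^ e := by
    rw [orderOf_pow, hx, Nat.gcd_eq_right htn, hqn,
      Nat.mul_div_cancel _ (Nat.pos_of_ne_zero ht0)]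
  have hYord : orderOf (y ^ t) = p ^ e := by
    rw [orderOf_pow, hy, Nat.gcd_eq_right htn, hqn,
      Nat.mul_div_cancel _ (Nat.pos_of_ne_zero ht0)]
  -- commutation inside P
  have hXP : x ^ t ∈ Subgroup.closure ({x ^ t, y ^ t} : Set G) :=
    Subgroup.subset_closure (Set.mem_insert _ _)
  have hYP : y ^ t ∈ Subgroup.closure ({x ^ t, y ^ t} : Set G) :=
    Subgroup.subset_closure (Set.mem_insert_of_mem _ rfl)
  have hcomm : Commute (x ^ t) (y ^ t) := hPab _ hXP _ hYP
  have hswap : ∀ m k : ℤ, (y ^ t) ^ m * (x ^ t) ^ k = (x ^ t) ^ k * (y ^ t) ^ m :=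
    fun m k => ((hcomm.symm).zpow_zpow m k).eq
  have hXYpow : ∀ u v m : ℤ, ((x ^ t) ^ u * (y ^ t) ^ v) ^ m
      = (x ^ t) ^ (u * m) * (y ^ t) ^ (v * m) := by
    intro u v m
    rw [(hcomm.zpow_zpow u v).mul_zpow, ← zpow_mul, ← zpow_mul]
  -- powers of x^t, y^t in the cyclic groups
  have hmx : ∀ m : ℤ, (x ^ t) ^ m ∈ Subgroup.zpowers x := fun m =>
    Subgroup.mem_zpowers_iff.mpr ⟨(t : ℤ) * m, by rw [zpow_mul, zpow_natCast]⟩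
  have hmy : ∀ m : ℤ, (y ^ t) ^ m ∈ Subgroup.zpowers y := fun m =>
    Subgroup.mem_zpowers_iff.mpr ⟨(t : ℤ) * m, by rw [zpow_mul, zpow_natCast]⟩
  have hXone : ∀ u : ℤ, ((p ^ e : ℕ) : ℤ) ∣ u ↔ (x ^ t) ^ u = 1 := fun u => by
    rw [← hXord]; exact orderOf_dvd_iff_zpow_eq_one
  have hYone : ∀ u : ℤ, ((p ^ e : ℕ) : ℤ) ∣ u ↔ (y ^ t) ^ u = 1 := fun u => by
    rw [← hYord]; exact orderOf_dvd_iff_zpow_eq_one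
  -- uniqueness of exponents
  have huniq : ∀ u v u' v' : ℤ,
      (x ^ t) ^ u * (y ^ t) ^ v = (x ^ t) ^ u' * (y ^ t) ^ v' →
      ((p ^ e : ℕ) : ℤ) ∣ (u - u') ∧ ((p ^ e : ℕ) : ℤ) ∣ (v - v') := by
    intro u v u' v' h
    have e1 : (x ^ t) ^ (u - u') * (y ^ t) ^ (v - v') = 1 := by
      calc (x ^ t) ^ (u - u') * (y ^ t) ^ (v - v')
          = (x ^ t) ^ (-u') * ((x ^ t) ^ u * (y ^ t) ^ v) * (y ^ t) ^ (-v') := by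
            rw [show u - u' = -u' + u by ring, show v - v' = v + -v' by ring,
              zpow_add, zpow_add]
            group
        _ = (x ^ t) ^ (-u') * ((x ^ t) ^ u' * (y ^ t) ^ v') * (y ^ t) ^ (-v') := by rw [h]
        _ = 1 := by group
    have e2 : (x ^ t) ^ (u - u') = ((y ^ t) ^ (v - v'))⁻¹ :=
      eq_inv_of_mul_eq_one_left e1
    have e3 : (x ^ t) ^ (u - u') ∈ Subgroup.zpowers x ⊓ Subgroup.zpowers y := by
      refine ⟨hmx _, ?_⟩
      rw [e2]
      exact Subgroup.inv_mem _ (hmy _)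
    rw [hinter, Subgroup.mem_bot] at e3
    have e4 : (y ^ t) ^ (v - v') = 1 := by
      rw [e3, one_mul] at e1; exact e1
    exact ⟨(hXone _).mpr e3, (hYone _).mpr e4⟩
  -- every element of P is a product of powers of the generators
  have hdecP : ∀ g ∈ Subgroup.closure ({x ^ t, y ^ t} : Set G),
      ∃ a b : ℤ, g = (x ^ t) ^ a * (y ^ t) ^ b := by
    intro g hg
    induction hg using Subgroup.closure_induction with
    | mem z hz =>
      rcases hz with hz | hz
      · exact ⟨1, 0, by rw [hz]; simp⟩
      · exact ⟨0, 1, by rw [Set.mem_singleton_iff.mp hz]; simp⟩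
    | one => exact ⟨0, 0, by simp⟩
    | mul u v hu hv ihu ihv =>
      obtain ⟨a1, b1, rfl⟩ := ihu
      obtain ⟨a2, b2, rfl⟩ := ihv
      refine ⟨a1 + a2, b1 + b2, ?_⟩
      calc ((x ^ t) ^ a1 * (y ^ t) ^ b1) * ((x ^ t) ^ a2 * (y ^ t) ^ b2)
          = (x ^ t) ^ a1 * ((y ^ t) ^ b1 * (x ^ t) ^ a2) * (y ^ t) ^ b2 := by group
        _ = (x ^ t) ^ a1 * ((x ^ t) ^ a2 * (y ^ t) ^ b1) * (y ^ t) ^ b2 := by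
            rw [hswap]
        _ = (x ^ t) ^ (a1 + a2) * (y ^ t) ^ (b1 + b2) := by
            rw [zpow_add, zpow_add]; group
    | inv u hu ihu =>
      obtain ⟨a1, b1, rfl⟩ := ihu
      refine ⟨-a1, -b1, ?_⟩
      calc ((x ^ t) ^ a1 * (y ^ t) ^ b1)⁻¹
          = (y ^ t) ^ (-b1) * (x ^ t) ^ (-a1) := by group
        _ = (x ^ t) ^ (-a1) * (y ^ t) ^ (-b1) := hswap _ _
  -- the fundamental decomposition of x⁻¹ y^t x
  have hzP : x⁻¹ * (y ^ t) * x ∈ Subgroup.closure ({x ^ t, y ^ t} : Set G) := by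
    have := hPnormal.conj_mem _ hYP x⁻¹
    simpa using this
  obtain ⟨a, b, hzab⟩ := hdecP _ hzP
  -- transport through α
  have hαz : y⁻¹ * (x ^ t) * y = (x ^ t) ^ b * (y ^ t) ^ a := by
    have h1 := congrArg α hzab
    simp only [map_mul, map_inv, map_zpow, map_pow, hαx, hαy] at h1
    rw [hswap] at h1
    exact h1
  -- conjugation helpers
  have hconjmul : ∀ g u v : G, g⁻¹ * (u * v) * g = (g⁻¹ * u * g) * (g⁻¹ * v * g) := by
    intro g u v; group
  have hconjzpow : ∀ (g u : G) (m : ℤ), g⁻¹ * u ^ m * g = (g⁻¹ * u * g) ^ m := by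
    intro g u m
    have := conj_zpow (i := m) (a := g⁻¹) (b := u)
    rw [inv_inv] at this
    exact this.symm
  have hpowconj : ∀ (g : G) (i : ℕ) (m : ℤ), (g ^ i)⁻¹ * (g ^ t) ^ m * g ^ i = (g ^ t) ^ m := by
    intro g i m
    have c : Commute (g ^ i) ((g ^ t) ^ m) := ((Commute.refl g).pow_pow i t).zpow_right m
    rw [mul_assoc, ← c.eq, ← mul_assoc, inv_mul_cancel, one_mul]
  have hpowconj1 : ∀ (g : G) (i : ℕ), (g ^ i)⁻¹ * g ^ t * g ^ i = g ^ t := by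
    intro g i
    simpa using hpowconj g i 1
  -- geometric sums over ℤ
  set S : ℕ → ℤ := fun k => ∑ i ∈ Finset.range k, b ^ i with hS
  have hSsucc : ∀ k : ℕ, S (k + 1) = S k + b ^ k := fun k => Finset.sum_range_succ _ _
  -- iteration lemmas
  have hiterY : ∀ k : ℕ, (x ^ k)⁻¹ * (y ^ t) * x ^ k
      = (x ^ t) ^ (a * S k) * (y ^ t) ^ (b ^ k) := by
    intro k
    induction k with
    | zero => simp [hS]
    | succ k ih =>
      have e1 : (x ^ (k + 1))⁻¹ * (y ^ t) * x ^ (k + 1)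
          = x⁻¹ * ((x ^ k)⁻¹ * (y ^ t) * x ^ k) * x := by
        rw [pow_succ]; group
      have hx1 : ∀ m : ℤ, x⁻¹ * (x ^ t) ^ m * x = (x ^ t) ^ m := by
        intro m; simpa using hpowconj x 1 m
      rw [e1, ih, hconjmul, hx1, hconjzpow, hzab, hXYpow, ← mul_assoc, ← zpow_add]
      rw [show a * S k + a * b ^ k = a * S (k + 1) by rw [hSsucc]; ring,
        show b * b ^ k = b ^ (k + 1) by ring]
  have hiterX : ∀ k : ℕ, (y ^ k)⁻¹ * (x ^ t) * y ^ k
      = (x ^ t) ^ (b ^ k) * (y ^ t) ^ (a * S k) := by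
    intro k
    induction k with
    | zero => simp [hS]
    | succ k ih =>
      have e1 : (y ^ (k + 1))⁻¹ * (x ^ t) * y ^ (k + 1)
          = y⁻¹ * ((y ^ k)⁻¹ * (x ^ t) * y ^ k) * y := by
        rw [pow_succ]; group
      have hy1 : ∀ m : ℤ, y⁻¹ * (y ^ t) ^ m * y = (y ^ t) ^ m := by
        intro m; simpa using hpowconj y 1 m
      rw [e1, ih, hconjmul, hy1, hconjzpow, hαz, hXYpow, mul_assoc, ← zpow_add]
      rw [show a * b ^ k + a * S k = a * S (k + 1) by rw [hSsucc]; ring,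
        show b * b ^ k = b ^ (k + 1) by ring]
  -- the relation from conjugating by x^t (which centralises P)
  have hYt : (x ^ t)⁻¹ * (y ^ t) * x ^ t = y ^ t := by
    rw [mul_assoc, ← hcomm.eq, ← mul_assoc, inv_mul_cancel, one_mul]
  have hkeyt : ((p ^ e : ℕ) : ℤ) ∣ (a * S t - 0) ∧ ((p ^ e : ℕ) : ℤ) ∣ (b ^ t - 1) := by
    apply huniq
    rw [← hiterY t, hYt, zpow_zero, one_mul, zpow_one]
  -- decomposition of arbitrary group elements with natural exponents
  have hdec : ∀ g : G, ∃ i j : ℕ, g = x ^ i * y ^ j := by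
    intro g
    have hg : g ∈ (↑(Subgroup.zpowers x) * ↑(Subgroup.zpowers y) : Set G) := by
      rw [hprod]; exact Set.mem_univ g
    obtain ⟨u, hu, v, hv, huv⟩ := Set.mem_mul.mp hg
    obtain ⟨i, hi⟩ := Subgroup.mem_zpowers_iff.mp hu
    obtain ⟨j, hj⟩ := Subgroup.mem_zpowers_iff.mp hv
    refine ⟨(i % (n : ℤ)).toNat, (j % (n : ℤ)).toNat, ?_⟩
    have hnn : ((n : ℤ)) ≠ 0 := by exact_mod_cast hn.ne'
    have hxi : x ^ ((i % (n : ℤ)).toNat) = x ^ i := by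
      rw [← zpow_natCast, Int.toNat_of_nonneg (Int.emod_nonneg i hnn)]
      rw [← hx] at *
      exact zpow_mod_orderOf x i
    have hyj : y ^ ((j % (n : ℤ)).toNat) = y ^ j := by
      rw [← zpow_natCast, Int.toNat_of_nonneg (Int.emod_nonneg j hnn)]
      have : (n : ℤ) = (orderOf y : ℤ) := by rw [hy]
      rw [this]
      exact zpow_mod_orderOf y j
    rw [hxi, hyj, hi, hj, huv]
  -- the family of congruences
  have hfam : ∀ k : ℕ, ∃ j : ℕ,
      ((p ^ e : ℕ) : ℤ) ∣ ((b + a * S k * a) - b ^ j) ∧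
      ((p ^ e : ℕ) : ℤ) ∣ ((b ^ k * a) - a * S j) := by
    intro k
    obtain ⟨i, j, hk⟩ := hdec (y * x ^ k)
    refine ⟨j, ?_⟩
    have lhs : (y * x ^ k)⁻¹ * (x ^ t) * (y * x ^ k)
        = (x ^ t) ^ (b + a * S k * a) * (y ^ t) ^ (b ^ k * a) := by
      have e1 : (y * x ^ k)⁻¹ * (x ^ t) * (y * x ^ k)
          = (x ^ k)⁻¹ * (y⁻¹ * (x ^ t) * y) * x ^ k := by group
      rw [e1, hαz, hconjmul, hpowconj, hconjzpow, hiterY, hXYpow,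
        ← mul_assoc, ← zpow_add]
    have rhs : (y * x ^ k)⁻¹ * (x ^ t) * (y * x ^ k)
        = (x ^ t) ^ ((b : ℤ) ^ j) * (y ^ t) ^ (a * S j) := by
      rw [hk]
      have e1 : (x ^ i * y ^ j)⁻¹ * (x ^ t) * (x ^ i * y ^ j)
          = (y ^ j)⁻¹ * ((x ^ i)⁻¹ * (x ^ t) * x ^ i) * y ^ j := by group
      rw [e1, hpowconj1, hiterX]
    exact huniq _ _ _ _ (lhs.symm.trans rhs)
  -- pass to ZMod (p^e)
  have hA0 : ((a : ℤ) : ZMod (p ^ e)) = 0 := by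
    set A : ZMod (p ^ e) := ((a : ℤ) : ZMod (p ^ e)) with hA
    set β : ZMod (p ^ e) := ((b : ℤ) : ZMod (p ^ e)) with hβ
    have hbt : β ^ t = 1 := by
      have := (ZMod.intCast_zmod_eq_zero_iff_dvd _ (p ^ e)).mpr hkeyt.2
      push_cast at this
      rw [hβ]
      linear_combination this
    have hAt : A * (∑ i ∈ Finset.range t, β ^ i) = 0 := by
      have := (ZMod.intCast_zmod_eq_zero_iff_dvd _ (p ^ e)).mpr hkeyt.1
      rw [hS] at this
      push_cast at this
      rw [hA, hβ]
      linear_combination this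
    have hC : ∀ k : ℕ, ∃ j : ℕ,
        β + A ^ 2 * (∑ i ∈ Finset.range k, β ^ i) = β ^ j ∧
        A * β ^ k = A * (∑ i ∈ Finset.range j, β ^ i) := by
      intro k
      obtain ⟨j, h1, h2⟩ := hfam k
      have c1 := (ZMod.intCast_zmod_eq_zero_iff_dvd _ (p ^ e)).mpr h1
      have c2 := (ZMod.intCast_zmod_eq_zero_iff_dvd _ (p ^ e)).mpr h2
      rw [hS] at c1 c2
      push_cast at c1 c2
      exact ⟨j, by rw [hA, hβ]; linear_combination c1, by rw [hA, hβ]; linear_combination c2⟩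
    exact aux_endgame hp he ht0 hpt A β hbt hAt hC
  have hqa : ((p ^ e : ℕ) : ℤ) ∣ a := (ZMod.intCast_zmod_eq_zero_iff_dvd a (p ^ e)).mp hA0
  have hXa : (x ^ t) ^ a = 1 := (hXone a).mp hqa
  have hYa : (y ^ t) ^ a = 1 := (hYone a).mp hqa
  refine ⟨b, ?_, ?_, by group, by group⟩
  · rw [hzab, hXa, one_mul]
  · rw [hαz, hYa, mul_one]
end

section
/- Let G be an n-isobicyclic group, let p and q be distinct primes dividing n with q not dividing p − 1, let P be an abelian normal Sylow p-subgroup of G, and let Q be a Sylow q-subgroup of G. Then Q centralises P; that is, every element of Q commutes with every element of P. -/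
/-!
Let `C` be the centraliser of `P`, a normal subgroup. Since `G = ⟨x⟩⟨y⟩`, the quotient `G ⧸ C` is
the product of the cyclic groups generated by the images of `x` and `y`; once `x ^ (p - 1)` and
`y ^ (p - 1)` lie in `C`, the order of `G ⧸ C` divides `(p - 1) ^ 2`, which is prime to `q`, so
the image of `Q` is trivial.

Write `n = p ^ e * m` with `p ∤ m`. The elements `u = x ^ m` and `v = y ^ m` have order `p ^ e`,
and by counting `P = ⟨u⟩⟨v⟩`. Conjugation by `x` fixes `u` and sends `v` to `u ^ i * v ^ j`.
As `x ^ m = u` centralises `P`, `j ^ m ≡ 1` modulo `p ^ e`, and since the unit group of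
`ZMod (p ^ e)` has order `p ^ (e - 1) * (p - 1)` this forces `j ^ (p - 1) ≡ 1`. Thus conjugation
by `x ^ (p - 1)` is `v ↦ u ^ r * v`, whose `p ^ e`-th power is trivial. Both `(x ^ (p - 1)) ^ m`
and `(x ^ (p - 1)) ^ (p ^ e)` centralise `P`, hence so does `x ^ (p - 1)`.
-/

open scoped Pointwise

open Subgroup

theorem pow_eq_one_of_pow_eq_one_of_pow_mul_eq_one {M : Type*} [Monoid M] {a : M} {k m N : ℕ}
    (hm : a ^ m = 1) (hN : a ^ (k * N) = 1) (h : m.Coprime N) : a ^ k = 1 :=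
  orderOf_dvd_iff_pow_eq_one.1 <|
    (h.coprime_dvd_left (orderOf_dvd_of_pow_eq_one hm)).dvd_of_dvd_mul_right
      (orderOf_dvd_of_pow_eq_one hN)

theorem ZMod.pow_sub_one_eq_one_of_pow_eq_one {p e m : ℕ} (hp : p.Prime) (hm : ¬ p ∣ m)
    {a : ZMod (p ^ e)} (ha : a ^ m = 1) : a ^ (p - 1) = 1 := by
  rcases e.eq_zero_or_pos with rfl | he
  · exact @Subsingleton.elim _ (by rw [pow_zero]; infer_instance) _ _
  have hunit : IsUnit a := IsUnit.of_pow_eq_one ha (by rintro rfl; exact hm (dvd_zero p))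
  have htot : a ^ ((p - 1) * p ^ (e - 1)) = 1 := by
    rw [mul_comm, ← Nat.totient_prime_pow hp he, ← hunit.unit_spec, ← Units.val_pow_eq_pow_val,
      ZMod.pow_totient, Units.val_one]
  exact pow_eq_one_of_pow_eq_one_of_pow_mul_eq_one ha htot
    (((Nat.Prime.coprime_iff_not_dvd hp).2 hm).symm.pow_right _)

section

variable {G : Type*} [Group G]

theorem Subgroup.natCard_mul_of_disjoint {H K : Subgroup G} (h : Disjoint H K) :
    Nat.card ((H : Set G) * (K : Set G)) = Nat.card H * Nat.card K := by
  have : (H : Set G) * (K : Set G) = Set.range fun z : H × K ↦ (z.1 : G) * z.2 := by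
    ext; simp [Set.mem_mul]
  rw [this, Nat.card_range_of_injective (mul_injective_of_disjoint h), Nat.card_prod]

theorem Subgroup.eq_of_mul_eq_of_disjoint {H K : Subgroup G} (h : Disjoint H K) {a b c : G}
    (ha : a ∈ H) (hb : b ∈ K) (hc : c ∈ K) (habc : a * b = c) : b = c := by
  have := mul_injective_of_disjoint h (a₁ := (⟨a, ha⟩, ⟨b, hb⟩)) (a₂ := (1, ⟨c, hc⟩))
    (by simpa using habc)
  simpa using congrArg (fun z ↦ (z.2 : G)) this

theorem Subgroup.coe_eq_mul_of_card_mul_eq [Finite G] {A H K : Subgroup G} (hH : H ≤ A)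
    (hK : K ≤ A) (hdisj : Disjoint H K) (hcard : Nat.card H * Nat.card K = Nat.card A) :
    (A : Set G) = (H : Set G) * (K : Set G) := by
  have hsub : (H : Set G) * (K : Set G) ⊆ A :=
    Set.mul_subset_iff.2 fun a ha b hb ↦ A.mul_mem (hH ha) (hK hb)
  refine (Set.eq_of_subset_of_ncard_le hsub ?_ (Set.toFinite _)).symm
  rw [← Nat.card_coe_set_eq, ← Nat.card_coe_set_eq, natCard_mul_of_disjoint hdisj, hcard]
  rfl

theorem natCard_eq_orderOf_mul_orderOf {x y : G}
    (h : (zpowers x : Set G) * (zpowers y : Set G) = Set.univ)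
    (hdisj : Disjoint (zpowers x) (zpowers y)) :
    Nat.card G = orderOf x * orderOf y := by
  rw [← Nat.card_univ, ← h, natCard_mul_of_disjoint hdisj, Nat.card_zpowers, Nat.card_zpowers]

theorem Subgroup.natCard_dvd_of_mul_eq_univ [Finite G] {H K : Subgroup G}
    (h : (H : Set G) * (K : Set G) = Set.univ) : Nat.card G ∣ Nat.card H * Nat.card K := by
  have horbit : MulAction.orbit H ((1 : G) : G ⧸ K) = Set.univ := by
    refine Set.eq_univ_of_forall fun c ↦ ?_
    obtain ⟨g, rfl⟩ := QuotientGroup.mk_surjective c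
    obtain ⟨a, ha, b, hb, rfl⟩ := Set.eq_univ_iff_forall.1 h g
    refine ⟨⟨a, ha⟩, ?_⟩
    show ((a : G) • ((1 : G) : G ⧸ K)) = ((a * b : G) : G ⧸ K)
    rw [MulAction.Quotient.smul_coe, smul_eq_mul, mul_one, QuotientGroup.eq,
      inv_mul_cancel_left]
    exact hb
  have hindex : K.index = (MulAction.stabilizer H ((1 : G) : G ⧸ K)).index := by
    rw [MulAction.index_stabilizer, horbit, Set.ncard_univ, index]
  calc Nat.card G = Nat.card K * K.index := (card_mul_index K).symm
    _ ∣ Nat.card K * Nat.card H := mul_dvd_mul_left _ (hindex ▸ index_dvd_card _)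
    _ = Nat.card H * Nat.card K := mul_comm _ _

theorem natCard_dvd_orderOf_mul_orderOf [Finite G] {x y : G}
    (h : (zpowers x : Set G) * (zpowers y : Set G) = Set.univ) :
    Nat.card G ∣ orderOf x * orderOf y := by
  simpa only [Nat.card_zpowers] using natCard_dvd_of_mul_eq_univ h

theorem zpowers_map_mul_zpowers_map_eq_univ {H : Type*} [Group H] {f : G →* H}
    (hf : Function.Surjective f) {x y : G}
    (h : (zpowers x : Set G) * (zpowers y : Set G) = Set.univ) :
    (zpowers (f x) : Set H) * (zpowers (f y) : Set H) = Set.univ := by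
  rw [← f.map_zpowers, ← f.map_zpowers, coe_map, coe_map, ← Set.image_mul, h,
    Set.image_univ_of_surjective hf]

theorem Subgroup.mem_of_pow_mem_of_pow_mem {H : Subgroup G} {a : G} {m N : ℕ} (hm : a ^ m ∈ H)
    (hN : a ^ N ∈ H) (h : m.Coprime N) : a ∈ H := by
  have : a = (a ^ m) ^ m.gcdA N * (a ^ N) ^ m.gcdB N := by
    rw [← zpow_natCast, ← zpow_natCast, ← zpow_mul, ← zpow_mul, ← zpow_add, ← Nat.gcd_eq_gcd_ab,
      h.gcd_eq_one, Nat.cast_one, zpow_one]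
  rw [this]
  exact mul_mem (zpow_mem hm _) (zpow_mem hN _)

theorem IsPGroup.le_of_coprime_natCard_quotient {q : ℕ} {Q N : Subgroup G} [N.Normal]
    (hQ : IsPGroup q Q) (h : q.Coprime (Nat.card (G ⧸ N))) : Q ≤ N := by
  intro a ha
  obtain ⟨k, hk⟩ := hQ ⟨a, ha⟩
  have hk' : (a : G ⧸ N) ^ q ^ k = 1 := by
    rw [← QuotientGroup.mk_pow, show a ^ q ^ k = 1 from congrArg Subtype.val hk,
      QuotientGroup.mk_one]
  rw [← QuotientGroup.eq_one_iff, ← orderOf_eq_one_iff]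
  exact Nat.eq_one_of_dvd_coprimes (h.pow_left k) (orderOf_dvd_of_pow_eq_one hk')
    (orderOf_dvd_natCard _)

theorem Sylow.mem_of_orderOf_eq_pow [Finite G] {p k : ℕ} [Fact p.Prime] (P : Sylow p G)
    [P.Normal] {z : G} (hz : orderOf z = p ^ k) : z ∈ P := by
  have : IsPGroup p (zpowers z) := IsPGroup.of_card (n := k) (by rwa [Nat.card_zpowers])
  obtain ⟨R, hR⟩ := this.exists_le_sylow
  have := Sylow.unique_of_normal P ‹_›
  exact Subsingleton.elim R P ▸ hR (mem_zpowers z)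

theorem MulAut.conj_apply_eq_iff_commute {g v : G} : MulAut.conj g v = v ↔ Commute g v := by
  rw [MulAut.conj_apply, mul_inv_eq_iff_eq_mul]; rfl

theorem MulAut.conj_pow_eq_zpow_mul_zpow {g u v : G} {i j : ℤ} (hgu : Commute g u)
    (huv : Commute u v) (h : MulAut.conj g v = u ^ i * v ^ j) (k : ℕ) :
    MulAut.conj (g ^ k) v = u ^ (i * ∑ l ∈ Finset.range k, j ^ l) * v ^ (j ^ k) := by
  induction k with
  | zero => simp
  | succ k ih =>
    have hu : MulAut.conj g u = u := by rw [MulAut.conj_apply, hgu.eq, mul_inv_cancel_right]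
    rw [pow_succ', map_mul, MulAut.mul_apply, ih, map_mul, map_zpow, map_zpow, hu, h,
      (huv.zpow_zpow i j).mul_zpow, ← zpow_mul, ← zpow_mul, ← mul_assoc, ← zpow_add,
      Finset.sum_range_succ, pow_succ]
    congr 2 <;> ring

theorem commute_pow_sub_one_mul_prime_pow {p e m : ℕ} (hp : p.Prime) (hm : ¬ p ∣ m) {g u v : G}
    (hu : u ^ p ^ e = 1) (hv : orderOf v = p ^ e) (hdisj : Disjoint (zpowers u) (zpowers v))
    (huv : Commute u v) (hgu : Commute g u)
    (hgv : MulAut.conj g v ∈ (zpowers u : Set G) * (zpowers v : Set G))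
    (hgm : Commute (g ^ m) v) :
    Commute (g ^ ((p - 1) * p ^ e)) v := by
  obtain ⟨_, ⟨i, rfl⟩, _, ⟨j, rfl⟩, hij⟩ := hgv
  have hconj := MulAut.conj_pow_eq_zpow_mul_zpow hgu huv hij.symm
  have hjm : (j : ZMod (p ^ e)) ^ m = 1 := by
    have hvm : v ^ (j ^ m) = v ^ (1 : ℤ) := by
      have hfix := hconj m
      rw [MulAut.conj_apply_eq_iff_commute.2 hgm] at hfix
      rw [zpow_one]
      exact eq_of_mul_eq_of_disjoint hdisj (zpow_mem (mem_zpowers u) _)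
        (zpow_mem (mem_zpowers v) _) (mem_zpowers v) hfix.symm
    rw [zpow_eq_zpow_iff_modEq, hv, ← ZMod.intCast_eq_intCast_iff] at hvm
    exact_mod_cast hvm
  have hvj : v ^ (j ^ (p - 1)) = v ^ (1 : ℤ) := by
    rw [zpow_eq_zpow_iff_modEq, hv, ← ZMod.intCast_eq_intCast_iff]
    exact_mod_cast ZMod.pow_sub_one_eq_one_of_pow_eq_one hp hm hjm
  have hunipotent : MulAut.conj (g ^ (p - 1)) v =
      u ^ (i * ∑ l ∈ Finset.range (p - 1), j ^ l) * v ^ (1 : ℤ) := by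
    rw [hconj, hvj]
  rw [← MulAut.conj_apply_eq_iff_commute, pow_mul,
    MulAut.conj_pow_eq_zpow_mul_zpow (hgu.pow_left (p - 1)) huv hunipotent (p ^ e)]
  simp only [one_pow, Finset.sum_const, Finset.card_range, nsmul_eq_mul, mul_one, zpow_one]
  rw [mul_comm, zpow_mul, zpow_natCast, hu, one_zpow, one_mul]

theorem pow_sub_one_mem_centralizer_of_coe_eq_mul {p e m : ℕ} (hp : p.Prime) (hm : ¬ p ∣ m)
    {A : Subgroup G} [A.Normal] {g v : G}
    (hA : (A : Set G) = (zpowers (g ^ m) : Set G) * (zpowers v : Set G))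
    (hdisj : Disjoint (zpowers (g ^ m)) (zpowers v)) (hu : (g ^ m) ^ p ^ e = 1)
    (hv : orderOf v = p ^ e) (huv : Commute (g ^ m) v) :
    g ^ (p - 1) ∈ centralizer (A : Set G) := by
  have hcent : ∀ c, Commute c (g ^ m) → Commute c v → c ∈ centralizer (A : Set G) := by
    intro c hcu hcv
    rw [mem_centralizer_iff, hA]
    rintro _ ⟨_, ⟨s, rfl⟩, _, ⟨t, rfl⟩, rfl⟩
    exact ((hcu.zpow_right s).mul_right (hcv.zpow_right t)).eq.symm
  have hvA : v ∈ A := by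
    rw [← SetLike.mem_coe, hA]
    exact ⟨1, one_mem _, v, mem_zpowers v, one_mul v⟩
  have hgv : MulAut.conj g v ∈ (zpowers (g ^ m) : Set G) * (zpowers v : Set G) :=
    hA ▸ ‹A.Normal›.conj_mem v hvA g
  have hkey := commute_pow_sub_one_mul_prime_pow hp hm hu hv hdisj huv (Commute.self_pow g m)
    hgv huv
  refine mem_of_pow_mem_of_pow_mem (m := m) (N := p ^ e) ?_ ?_
    (((Nat.Prime.coprime_iff_not_dvd hp).2 hm).symm.pow_right e)
  · rw [← pow_mul, mul_comm, pow_mul]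
    exact pow_mem (hcent _ (Commute.refl _) huv) _
  · rw [← pow_mul]
    exact hcent _ ((Commute.self_pow g m).pow_left _) hkey

theorem Sylow.pow_sub_one_mem_centralizer [Finite G] {p e m : ℕ} [Fact p.Prime] (P : Sylow p G)
    [P.Normal] (hPcomm : ∀ a ∈ (P : Subgroup G), ∀ b ∈ (P : Subgroup G), a * b = b * a)
    {x y : G} (hm : ¬ p ∣ m) (hx : orderOf x = p ^ e * m) (hy : orderOf y = p ^ e * m)
    (hdisj : Disjoint (zpowers x) (zpowers y)) (hG : Nat.card G = orderOf x * orderOf y) :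
    x ^ (p - 1) ∈ centralizer ((P : Subgroup G) : Set G) := by
  have hp : p.Prime := Fact.out
  have hm0 : m ≠ 0 := by rintro rfl; exact hm (dvd_zero p)
  have horder {z : G} (hz : orderOf z = p ^ e * m) : orderOf (z ^ m) = p ^ e := by
    rw [orderOf_pow_of_dvd hm0 (hz ▸ dvd_mul_left m _), hz, Nat.mul_div_cancel _ hm0.bot_lt]
  have hxP := P.mem_of_orderOf_eq_pow (horder hx)
  have hyP := P.mem_of_orderOf_eq_pow (horder hy)
  have hdisj' : Disjoint (zpowers (x ^ m)) (zpowers (y ^ m)) :=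
    hdisj.mono (zpowers_le.2 (pow_mem (mem_zpowers x) m))
      (zpowers_le.2 (pow_mem (mem_zpowers y) m))
  have hcardP : Nat.card P = p ^ e * p ^ e := by
    rw [P.card_eq_multiplicity, hG, hx, hy]
    simp [Nat.factorization_mul, hp.ne_zero, hm0, Nat.factorization_eq_zero_of_not_dvd hm,
      hp.factorization_self, pow_add]
  have hP := coe_eq_mul_of_card_mul_eq (zpowers_le.2 hxP) (zpowers_le.2 hyP) hdisj'
    (by rw [Nat.card_zpowers, Nat.card_zpowers, horder hx, horder hy, hcardP])
  exact pow_sub_one_mem_centralizer_of_coe_eq_mul hp hm hP hdisj'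
    (horder hx ▸ pow_orderOf_eq_one _) (horder hy) (hPcomm _ hxP _ hyP)

end

theorem sylow_acts_trivially_when_q_not_dvd_p_sub_one_general
    {G : Type*} [Group G] [Finite G] (n : ℕ) (hn : 0 < n) (x y : G)
    (hx : orderOf x = n) (hy : orderOf y = n)
    (hprod : (↑(Subgroup.zpowers x) * ↑(Subgroup.zpowers y) : Set G) = Set.univ)
    (hinter : Subgroup.zpowers x ⊓ Subgroup.zpowers y = ⊥)
    (p q : ℕ) (hp : p.Prime) (hq : q.Prime)
    (hqp : ¬ q ∣ p - 1)
    (P : Sylow p G) (hPnormal : (P : Subgroup G).Normal)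
    (hPab : ∀ a ∈ (P : Subgroup G), ∀ b ∈ (P : Subgroup G), a * b = b * a)
    (Q : Sylow q G) :
    ∀ a ∈ (Q : Subgroup G), ∀ b ∈ (P : Subgroup G), a * b = b * a := by
  have : Fact p.Prime := ⟨hp⟩
  have := hPnormal
  obtain ⟨e, m, hm, hnm⟩ := Nat.exists_eq_pow_mul_and_not_dvd hn.ne' p hp.ne_one
  have hdisj : Disjoint (zpowers x) (zpowers y) := disjoint_iff.2 hinter
  have hG := natCard_eq_orderOf_mul_orderOf hprod hdisj
  set C := centralizer ((P : Subgroup G) : Set G)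
  have hxC : (x : G ⧸ C) ^ (p - 1) = 1 := by
    rw [← QuotientGroup.mk_pow, QuotientGroup.eq_one_iff]
    exact P.pow_sub_one_mem_centralizer hPab hm (hx.trans hnm) (hy.trans hnm) hdisj hG
  have hyC : (y : G ⧸ C) ^ (p - 1) = 1 := by
    rw [← QuotientGroup.mk_pow, QuotientGroup.eq_one_iff]
    exact P.pow_sub_one_mem_centralizer hPab hm (hy.trans hnm) (hx.trans hnm) hdisj.symm
      (hG.trans (mul_comm _ _))
  have hcard : Nat.card (G ⧸ C) ∣ (p - 1) * (p - 1) :=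
    (natCard_dvd_orderOf_mul_orderOf
      (zpowers_map_mul_zpowers_map_eq_univ (QuotientGroup.mk'_surjective _) hprod)).trans
      (mul_dvd_mul (orderOf_dvd_of_pow_eq_one hxC) (orderOf_dvd_of_pow_eq_one hyC))
  have hqp' : q.Coprime (p - 1) := (Nat.Prime.coprime_iff_not_dvd hq).2 hqp
  have hQC : (Q : Subgroup G) ≤ C :=
    Q.isPGroup'.le_of_coprime_natCard_quotient ((hqp'.mul_right hqp').coprime_dvd_right hcard)
  exact fun a ha b hb ↦ (mem_centralizer_iff.1 (hQC ha) b hb).symm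

/-- Corollary 7.3, second part. If `G` is `n`-isobicyclic, `P` an abelian
normal Sylow `p`-subgroup, `Q` a Sylow `q`-subgroup for a prime `q ≠ p` with `q ∤ p − 1`,
then `Q` centralises `P`. -/
theorem sylow_acts_trivially_when_q_not_dvd_p_sub_one
    {G : Type*} [Group G] [Finite G] (n : ℕ) (hn : 0 < n) (x y : G)
    (hx : orderOf x = n) (hy : orderOf y = n)
    (hprod : (↑(Subgroup.zpowers x) * ↑(Subgroup.zpowers y) : Set G) = Set.univ)
    (hinter : Subgroup.zpowers x ⊓ Subgroup.zpowers y = ⊥)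
    (α : G ≃* G) (hαx : α x = y) (hαy : α y = x)
    (p q : ℕ) (hp : p.Prime) (hq : q.Prime) (hpq : p ≠ q) (hpn : p ∣ n) (hqn : q ∣ n)
    (hqp : ¬ q ∣ p - 1)
    (P : Sylow p G) (hPnormal : (P : Subgroup G).Normal)
    (hPab : ∀ a ∈ (P : Subgroup G), ∀ b ∈ (P : Subgroup G), a * b = b * a)
    (Q : Sylow q G) :
    ∀ a ∈ (Q : Subgroup G), ∀ b ∈ (P : Subgroup G), a * b = b * a :=
  sylow_acts_trivially_when_q_not_dvd_p_sub_one_general n hn x y hx hy hprod hinter p q hp hq hqp P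
    hPnormal hPab Q
end

section
/- Let t ≥ 1 be an integer and let λ ∈ Z/tZ be a unit such that λ − 1 is also a unit in Z/tZ. Let S be a finite group with elements x_S, y_S ∈ S, let T = Z/tZ × Z/tZ (written additively), and let ψ : S → Aut(T) be a group homomorphism such that ψ(x_S)(a, b) = (a, λb) and ψ(y_S)(a, b) = (λa, b) for all (a, b) ∈ T. Form the semidirect product G = T ⋊_ψ S, and set x = ((1, 0), x_S) and y = ((0, 1), y_S) in G. Then the order of x·y in G equals the order of x_S·y_S in S. -/
/-! If `ψ(s)` acts on `T` as multiplication by `λ` and `λ - 1` is invertible, then every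
`v ∈ T` is a coboundary `v = ψ(s)(m) - m`, and `(v, s)` is the conjugate of `(0, s)` by `(m, 1)`.
Conjugate elements have the same order, and `(0, s)` has the order of `s`. Here `s = x_S y_S`,
which acts as `λ` on both coordinates. -/

namespace SemidirectProduct

variable {N G : Type*} [Group N] [Group G] {φ : G →* MulAut N}

theorem mk_inv_mul_apply_eq_conj (n : N) (g : G) :
    (⟨n⁻¹ * φ g n, g⟩ : N ⋊[φ] G) = MulAut.conj (inl n)⁻¹ (inr g) := by
  ext <;> simp

theorem orderOf_mk_inv_mul_apply (n : N) (g : G) :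
    orderOf (⟨n⁻¹ * φ g n, g⟩ : N ⋊[φ] G) = orderOf g := by
  rw [mk_inv_mul_apply_eq_conj, MulEquiv.orderOf_eq, orderOf_injective inr inr_injective]

theorem orderOf_mk_of_apply_eq_smul {R M : Type*} [Ring R] [AddCommGroup M] [Module R M]
    {φ : G →* MulAut (Multiplicative M)} {g : G} {c : R} (hc : IsUnit (c - 1))
    (hg : ∀ v : M, φ g (Multiplicative.ofAdd v) = Multiplicative.ofAdd (c • v)) (v : M) :
    orderOf (⟨Multiplicative.ofAdd v, g⟩ : Multiplicative M ⋊[φ] G) = orderOf g := by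
  obtain ⟨m, rfl⟩ : ∃ m : M, (c - 1) • m = v :=
    ⟨(hc.unit⁻¹ : Rˣ) • v, smul_inv_smul hc.unit v⟩
  have hv : Multiplicative.ofAdd ((c - 1) • m) =
      (Multiplicative.ofAdd m)⁻¹ * φ g (Multiplicative.ofAdd m) := by
    rw [hg, sub_smul, one_smul, ← ofAdd_neg, ← ofAdd_add, neg_add_eq_sub]
  rw [hv, orderOf_mk_inv_mul_apply]

end SemidirectProduct

theorem order_xy_in_semidirect_product_general
    (t : ℕ) (lam : ZMod t) (hlam1 : IsUnit (lam - 1))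
    (S : Type*) [Group S] (xS yS : S)
    (ψ : S →* MulAut (Multiplicative (ZMod t × ZMod t)))
    (hψx : ∀ v : ZMod t × ZMod t,
      ψ xS (Multiplicative.ofAdd v) = Multiplicative.ofAdd (v.1, lam * v.2))
    (hψy : ∀ v : ZMod t × ZMod t,
      ψ yS (Multiplicative.ofAdd v) = Multiplicative.ofAdd (lam * v.1, v.2)) :
    orderOf ((⟨Multiplicative.ofAdd ((1 : ZMod t), (0 : ZMod t)), xS⟩ :
        Multiplicative (ZMod t × ZMod t) ⋊[ψ] S) *
      (⟨Multiplicative.ofAdd ((0 : ZMod t), (1 : ZMod t)), yS⟩ :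
        Multiplicative (ZMod t × ZMod t) ⋊[ψ] S)) = orderOf (xS * yS) := by
  have hψxy : ∀ v : ZMod t × ZMod t,
      ψ (xS * yS) (Multiplicative.ofAdd v) = Multiplicative.ofAdd (lam • v) := by
    intro v
    rw [map_mul, MulAut.mul_apply, hψy, hψx]
    rfl
  have hxy : (⟨Multiplicative.ofAdd ((1 : ZMod t), (0 : ZMod t)), xS⟩ :
        Multiplicative (ZMod t × ZMod t) ⋊[ψ] S) *
      ⟨Multiplicative.ofAdd ((0 : ZMod t), (1 : ZMod t)), yS⟩ =
      ⟨Multiplicative.ofAdd (1, lam), xS * yS⟩ := by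
    refine SemidirectProduct.ext ?_ rfl
    rw [SemidirectProduct.mul_left, hψx, ← ofAdd_add]
    simp
  rw [hxy, SemidirectProduct.orderOf_mk_of_apply_eq_smul hlam1 hψxy]

/-- Lemma 9.1. Let `λ` be a unit of `Z/tZ` with `λ − 1` also a unit, let
`S` be a finite group with elements `x_S, y_S`, let `T = Z/tZ × Z/tZ`, and let
`ψ : S → Aut T` act with `ψ(x_S)(a,b) = (a, λb)` and `ψ(y_S)(a,b) = (λa, b)`. In the
semidirect product `G = T ⋊_ψ S`, the element `x·y` with `x = ((1,0), x_S)` and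
`y = ((0,1), y_S)` has the same order as `x_S·y_S` in `S`. -/
theorem order_xy_in_semidirect_product
    (t : ℕ) (ht : 1 ≤ t) (lam : ZMod t) (hlam : IsUnit lam) (hlam1 : IsUnit (lam - 1))
    (S : Type*) [Group S] [Finite S] (xS yS : S)
    (ψ : S →* MulAut (Multiplicative (ZMod t × ZMod t)))
    (hψx : ∀ v : ZMod t × ZMod t,
      ψ xS (Multiplicative.ofAdd v) = Multiplicative.ofAdd (v.1, lam * v.2))
    (hψy : ∀ v : ZMod t × ZMod t,
      ψ yS (Multiplicative.ofAdd v) = Multiplicative.ofAdd (lam * v.1, v.2)) :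
    orderOf ((⟨Multiplicative.ofAdd ((1 : ZMod t), (0 : ZMod t)), xS⟩ :
        Multiplicative (ZMod t × ZMod t) ⋊[ψ] S) *
      (⟨Multiplicative.ofAdd ((0 : ZMod t), (1 : ZMod t)), yS⟩ :
        Multiplicative (ZMod t × ZMod t) ⋊[ψ] S)) = orderOf (xS * yS) :=
  order_xy_in_semidirect_product_general t lam hlam1 S xS yS ψ hψx hψy
end

section
/- Let V be a finite set and let ℓ : V × V → ℕ be a function (interpreted as a directed graph with an arc u → v labelled ℓ(u, v) whenever ℓ(u, v) ≥ 1). Suppose the directed graph is acyclic, i.e. the transitive closure of the relation { (u, v) : ℓ(u, v) ≥ 1 } is irreflexive. Then there exists an injective map θ : V → ℕ such that θ(v) is an odd prime for every v ∈ V, and for all distinct u, v ∈ V the exact multiplicity of the prime θ(u) in θ(v) − 1 equals ℓ(u, v); that is, θ(u)^ℓ(u,v) divides θ(v) − 1 but θ(u)^(ℓ(u,v)+1) does not. (Equivalently, every finite arc-labelled acyclic directed graph is isomorphic as a labelled directed graph to Π_n for some n, e.g. n the product of the primes θ(v).) -/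
/-!
Add the vertices one at a time, each time a sink of the part already placed. The prime for the
new vertex `v` is chosen by Dirichlet's theorem in the progression fixed by the Chinese remainder
conditions `p ≡ 1 + θ u ^ ℓ (u, v) [MOD θ u ^ (ℓ (u, v) + 1)]`, which pin the multiplicity of
`θ u` in `p - 1` to `ℓ (u, v)`; taking `p` larger than every prime used so far makes it new and
keeps it from dividing any `θ u - 1`, as the arcs out of a sink require.
-/

open Finset Function

theorem Nat.exists_prime_gt_forall_modEq {ι : Type*} (s : Finset ι) (a m : ι → ℕ)
    (hm : ∀ i ∈ s, m i ≠ 0) (hpair : (s : Set ι).Pairwise (Nat.Coprime on m))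
    (ha : ∀ i ∈ s, (a i).Coprime (m i)) (N : ℕ) :
    ∃ p, N < p ∧ p.Prime ∧ ∀ i ∈ s, p ≡ a i [MOD m i] := by
  obtain ⟨k, hk⟩ := Nat.chineseRemainderOfFinset a m s hm hpair
  have hkM : k.Coprime (∏ i ∈ s, m i) :=
    Nat.Coprime.prod_right fun i hi => ((hk i hi).gcd_eq).trans (ha i hi)
  obtain ⟨p, hpN, hp, hpk⟩ :=
    Nat.forall_exists_prime_gt_and_modEq N (Finset.prod_ne_zero_iff.mpr hm) hkM
  exact ⟨p, hpN, hp, fun i hi => (hpk.of_dvd (Finset.dvd_prod_of_mem m hi)).trans (hk i hi)⟩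

theorem Nat.coprime_one_add_pow_of_odd {q : ℕ} (hq : Odd q) (e : ℕ) :
    (1 + q ^ e).Coprime (q ^ (e + 1)) := by
  refine Nat.Coprime.pow_right _ ?_
  rcases e with _ | e
  · exact Nat.coprime_two_left.mpr hq
  · rw [pow_succ, Nat.coprime_add_mul_right_left]
    exact Nat.coprime_one_left q

theorem Nat.emultiplicity_eq_of_modEq_pow {q n e : ℕ} (hq : 1 < q)
    (h : n ≡ q ^ e [MOD q ^ (e + 1)]) : emultiplicity q n = e := by
  refine emultiplicity_eq_coe.mpr ⟨?_, ?_⟩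
  · exact (h.dvd_iff (pow_dvd_pow q e.le_succ)).mpr dvd_rfl
  · rw [h.dvd_iff dvd_rfl, Nat.pow_dvd_pow_iff_le_right hq]
    exact e.not_succ_le_self

theorem Nat.exists_prime_gt_forall_emultiplicity_sub_one {ι : Type*} (s : Finset ι)
    (q e : ι → ℕ) (hprime : ∀ i ∈ s, (q i).Prime) (hodd : ∀ i ∈ s, Odd (q i))
    (hinj : Set.InjOn q s) (N : ℕ) :
    ∃ p, N < p ∧ p.Prime ∧ ∀ i ∈ s, emultiplicity (q i) (p - 1) = e i := by
  have hpair : (s : Set ι).Pairwise (Nat.Coprime on fun i => q i ^ (e i + 1)) :=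
    fun i hi j hj hij => Nat.Coprime.pow _ _ <|
      (Nat.coprime_primes (hprime i hi) (hprime j hj)).mpr (hinj.ne hi hj hij)
  obtain ⟨p, hpN, hp, hpmod⟩ := Nat.exists_prime_gt_forall_modEq s (fun i => 1 + q i ^ e i)
    (fun i => q i ^ (e i + 1)) (fun i hi => pow_ne_zero _ (hprime i hi).ne_zero) hpair
    (fun i hi => Nat.coprime_one_add_pow_of_odd (hodd i hi) (e i)) N
  refine ⟨p, hpN, hp, fun i hi => Nat.emultiplicity_eq_of_modEq_pow (hprime i hi).one_lt ?_⟩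
  refine Nat.ModEq.add_left_cancel' 1 ?_
  rw [Nat.add_sub_cancel' hp.one_le]
  exact hpmod i hi

theorem Finset.exists_sink_of_acyclic {α : Type*} [Finite α] {r : α → α → Prop}
    (hr : ∀ a, ¬ Relation.TransGen r a a) {S : Finset α} (hS : S.Nonempty) :
    ∃ v ∈ S, ∀ u ∈ S, ¬ r v u := by
  have : IsTrans α (flip (Relation.TransGen r)) := ⟨fun _ _ _ hab hbc => hbc.trans hab⟩
  have : Std.Irrefl (flip (Relation.TransGen r)) := ⟨hr⟩
  obtain ⟨v, hv, hmin⟩ :=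
    (Finite.wellFounded_of_trans_of_irrefl (flip (Relation.TransGen r))).has_min (S : Set α) hS
  exact ⟨v, hv, fun u hu hvu => hmin u hu (.single hvu)⟩

structure IsPrimeRealisation {V : Type*} (ℓ : V × V → ℕ) (S : Finset V) (θ : V → ℕ) :
    Prop where
  injOn : Set.InjOn θ S
  prime : ∀ v ∈ S, (θ v).Prime
  odd : ∀ v ∈ S, Odd (θ v)
  emultiplicity_sub_one : ∀ u ∈ S, ∀ v ∈ S, u ≠ v → emultiplicity (θ u) (θ v - 1) = ℓ (u, v)

namespace IsPrimeRealisation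

variable {V : Type*} {ℓ : V × V → ℕ}

theorem empty (θ : V → ℕ) : IsPrimeRealisation ℓ ∅ θ :=
  ⟨by simp, by simp, by simp, by simp⟩

theorem exists_insert_of_sink [DecidableEq V] {S : Finset V} {θ : V → ℕ}
    (h : IsPrimeRealisation ℓ S θ) {v : V} (hv : v ∉ S) (hsink : ∀ u ∈ S, ℓ (v, u) = 0) :
    ∃ θ', IsPrimeRealisation ℓ (insert v S) θ' := by
  obtain ⟨p, hpN, hp, hpmult⟩ := Nat.exists_prime_gt_forall_emultiplicity_sub_one S θ
    (fun u => ℓ (u, v)) h.prime h.odd h.injOn (S.sup θ + 2)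
  have hlt : ∀ u ∈ S, θ u < p := fun u hu => by have := S.le_sup (f := θ) hu; omega
  have hθ'v : update θ v p v = p := update_self ..
  have hθ'S : Set.EqOn θ (update θ v p) S := fun u hu =>
    (update_of_ne (ne_of_mem_of_not_mem hu hv) _ _).symm
  refine ⟨update θ v p, ⟨?_, ?_, ?_, ?_⟩⟩
  · rw [coe_insert, Set.injOn_insert (by simpa using hv), hθ'v, ← hθ'S.image_eq]
    exact ⟨h.injOn.congr hθ'S, fun ⟨u, hu, hup⟩ => (hlt u hu).ne hup⟩
  · rw [forall_mem_insert, hθ'v]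
    exact ⟨hp, fun u hu => hθ'S hu ▸ h.prime u hu⟩
  · rw [forall_mem_insert, hθ'v]
    exact ⟨hp.odd_of_ne_two (by omega), fun u hu => hθ'S hu ▸ h.odd u hu⟩
  · simp only [forall_mem_insert, hθ'v, ne_eq, not_true_eq_false, false_imp_iff, true_and]
    refine ⟨fun w hw _ => ?_, fun u hu => ⟨fun _ => ?_, fun w hw huw => ?_⟩⟩
    · rw [← hθ'S hw, hsink w hw, Nat.cast_zero, emultiplicity_eq_zero]
      have := (h.prime w hw).two_le
      exact Nat.not_dvd_of_pos_of_lt (by omega) (by have := hlt w hw; omega)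
    · rw [← hθ'S hu]
      exact hpmult u hu
    · rw [← hθ'S hu, ← hθ'S hw]
      exact h.emultiplicity_sub_one u hu w hw huw

theorem exists_of_acyclic [Finite V]
    (hacyclic : ∀ v : V, ¬ Relation.TransGen (fun u w => 1 ≤ ℓ (u, w)) v v) (S : Finset V) :
    ∃ θ, IsPrimeRealisation ℓ S θ := by
  classical
  induction S using Finset.strongInduction with
  | H S ih =>
    rcases S.eq_empty_or_nonempty with rfl | hS
    · exact ⟨fun _ => 0, empty _⟩
    obtain ⟨v, hv, hsink⟩ := Finset.exists_sink_of_acyclic hacyclic hS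
    obtain ⟨θ, hθ⟩ := ih (S.erase v) (erase_ssubset hv)
    rw [← insert_erase hv]
    exact hθ.exists_insert_of_sink (notMem_erase v S) fun u hu =>
      Nat.lt_one_iff.mp (not_le.mp (hsink u (mem_of_mem_erase hu)))

end IsPrimeRealisation

/-- Proposition 13.1. Every finite arc-labelled acyclic directed graph is
isomorphic, as a labelled directed graph, to `Π_n` for some `n`: there is an injective
assignment `θ` of odd primes to the vertices such that for all distinct vertices `u, v`,
the exact multiplicity of `θ u` in `θ v − 1` equals the label `ℓ (u, v)`. -/
theorem labelled_acyclic_digraph_realised_by_primes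
    (V : Type*) [Finite V] (ℓ : V × V → ℕ)
    (hacyclic : ∀ v : V, ¬ Relation.TransGen (fun u w => 1 ≤ ℓ (u, w)) v v) :
    ∃ θ : V → ℕ, Function.Injective θ ∧
      (∀ v, (θ v).Prime ∧ Odd (θ v)) ∧
      ∀ u v : V, u ≠ v →
        θ u ^ ℓ (u, v) ∣ θ v - 1 ∧ ¬ θ u ^ (ℓ (u, v) + 1) ∣ θ v - 1 := by
  have := Fintype.ofFinite V
  obtain ⟨θ, hθ⟩ := IsPrimeRealisation.exists_of_acyclic hacyclic univ
  refine ⟨θ, by simpa using hθ.injOn, fun v => ⟨hθ.prime v (mem_univ v), hθ.odd v (mem_univ v)⟩,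
    fun u v huv => emultiplicity_eq_coe.mp ?_⟩
  exact hθ.emultiplicity_sub_one u (mem_univ u) v (mem_univ v) huv
end

section
/- Let V be a finite set and let ~ be a symmetric irreflexive relation on V (a finite simple graph). Then there exists an injective map θ : V → ℕ such that θ(v) is a prime for every v ∈ V, and for all distinct u, v ∈ V one has u ~ v if and only if θ(u) divides θ(v) − 1 or θ(v) divides θ(u) − 1. (Thus every finite graph is isomorphic to the underlying undirected graph of some Π_n, where n is the product of the primes θ(v).) -/
/-!
Label the vertices one at a time by odd primes. When a new vertex `a` arrives, the primes
already used split into those of the neighbours of `a` (product `P`) and the rest (product `Q`).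
By the Chinese remainder theorem and Dirichlet's theorem there is an arbitrarily large prime
`q ≡ 1 [MOD P]` with `q ≡ 2 [MOD Q]`, so exactly the neighbours' primes divide `q - 1`; taking `q`
larger than every earlier label also rules out `q ∣ θ v - 1`.
-/

theorem Nat.exists_prime_gt_modEq_one_modEq_two {P Q : ℕ} (hP : P ≠ 0) (hQ : Odd Q)
    (hPQ : P.Coprime Q) (B : ℕ) :
    ∃ q, B < q ∧ q.Prime ∧ q ≡ 1 [MOD P] ∧ q ≡ 2 [MOD Q] := by
  obtain ⟨k, hkP, hkQ⟩ := Nat.chineseRemainder hPQ 1 2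
  have hk : k.Coprime (P * Q) :=
    Nat.Coprime.mul_right (hkP.gcd_eq.trans P.gcd_one_left)
      (hkQ.gcd_eq.trans (Nat.coprime_two_left.mpr hQ))
  have : NeZero (P * Q) := ⟨mul_ne_zero hP hQ.pos.ne'⟩
  obtain ⟨q, hqB, hq, hqk⟩ :=
    Nat.forall_exists_prime_gt_and_eq_mod ((ZMod.isUnit_iff_coprime k _).mpr hk) B
  have hqk : q ≡ k [MOD P * Q] := (ZMod.natCast_eq_natCast_iff _ _ _).mp hqk
  exact ⟨q, hqB, hq, (hqk.of_mul_right Q).trans hkP, (hqk.of_mul_left P).trans hkQ⟩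

theorem Nat.exists_prime_gt_dvd_sub_one_iff {ι : Type*} (s : Finset ι) (p : ι → ℕ)
    (hp : ∀ i ∈ s, (p i).Prime ∧ p i ≠ 2) (hinj : Set.InjOn p s) (A : ι → Prop)
    [DecidablePred A] (B : ℕ) :
    ∃ q, B < q ∧ q.Prime ∧ ∀ i ∈ s, (p i ∣ q - 1 ↔ A i) := by
  set P := ∏ i ∈ s.filter A, p i
  set Q := ∏ i ∈ s.filter (¬ A ·), p i
  have hP : P ≠ 0 := Finset.prod_ne_zero_iff.mpr fun i hi =>
    (hp i (Finset.mem_filter.mp hi).1).1.ne_zero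
  have hQ : Odd Q := Nat.coprime_two_left.mp <| Nat.Coprime.prod_right fun i hi => by
    obtain ⟨hpi, hpi2⟩ := hp i (Finset.mem_filter.mp hi).1
    exact Nat.coprime_two_left.mpr (hpi.odd_of_ne_two hpi2)
  have hPQ : P.Coprime Q := Nat.Coprime.prod_left fun i hi => Nat.Coprime.prod_right fun j hj => by
    rw [Finset.mem_filter] at hi hj
    exact (Nat.coprime_primes (hp i hi.1).1 (hp j hj.1).1).mpr fun h =>
      hj.2 (hinj hi.1 hj.1 h ▸ hi.2)
  obtain ⟨q, hqB, hq, hqP, hqQ⟩ := Nat.exists_prime_gt_modEq_one_modEq_two hP hQ hPQ B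
  refine ⟨q, hqB, hq, fun i hi => ⟨fun hdvd => ?_, fun hA => ?_⟩⟩
  · by_contra hA
    have h2 : p i ∣ q - 2 := (Nat.modEq_iff_dvd' hq.two_le).mp
      (hqQ.of_dvd (Finset.dvd_prod_of_mem p (Finset.mem_filter.mpr ⟨hi, hA⟩))).symm
    have h1 : p i ∣ q - 1 - (q - 2) := Nat.dvd_sub hdvd h2
    rw [show q - 1 - (q - 2) = 1 by have := hq.two_le; omega, Nat.dvd_one] at h1
    exact (hp i hi).1.one_lt.ne' h1
  · exact (Finset.dvd_prod_of_mem p (Finset.mem_filter.mpr ⟨hi, hA⟩)).trans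
      ((Nat.modEq_iff_dvd' hq.one_le).mp hqP.symm)

theorem exists_odd_prime_labelling {V : Type*} (adj : V → V → Prop)
    (hsymm : ∀ u v, adj u v → adj v u) (s : Finset V) :
    ∃ θ : V → ℕ, Set.InjOn θ s ∧ (∀ v ∈ s, (θ v).Prime ∧ θ v ≠ 2) ∧
      ∀ u ∈ s, ∀ v ∈ s, u ≠ v → (adj u v ↔ (θ u ∣ θ v - 1 ∨ θ v ∣ θ u - 1)) := by
  classical
  induction s using Finset.induction_on with
  | empty => exact ⟨fun _ => 0, by simp, by simp, by simp⟩
  | insert a s ha ih =>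
    obtain ⟨θ, hinj, hprime, hadj⟩ := ih
    obtain ⟨q, hqB, hq, hqdvd⟩ :=
      Nat.exists_prime_gt_dvd_sub_one_iff s θ hprime hinj (adj a) (2 + s.sup θ)
    have hθq : ∀ v ∈ s, θ v < q := fun v hv => by
      have := Finset.le_sup (f := θ) hv; omega
    have hq_not_dvd : ∀ v ∈ s, ¬ q ∣ θ v - 1 := fun v hv hdvd => by
      have := Nat.le_of_dvd (by have := (hprime v hv).1.two_le; omega) hdvd
      have := hθq v hv; omega
    have hadj_a : ∀ v ∈ s, adj a v ↔ (q ∣ θ v - 1 ∨ θ v ∣ q - 1) := fun v hv => by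
      simp [hq_not_dvd v hv, hqdvd v hv]
    have heq : Set.EqOn (Function.update θ a q) θ s := fun v hv =>
      Function.update_of_ne (ne_of_mem_of_not_mem hv ha) _ _
    refine ⟨Function.update θ a q, ?_, ?_, ?_⟩
    · rw [Finset.coe_insert, Set.injOn_insert (by simpa using ha), Function.update_self]
      refine ⟨hinj.congr heq.symm, ?_⟩
      rintro ⟨v, hv, hqv⟩
      exact (hθq v hv).ne (heq hv ▸ hqv)
    · simp only [Finset.forall_mem_insert, Function.update_self]
      exact ⟨⟨hq, by omega⟩, fun v hv => heq hv ▸ hprime v hv⟩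
    · simp only [Finset.forall_mem_insert, Function.update_self]
      refine ⟨⟨fun h => absurd rfl h, fun v hv _ => heq hv ▸ hadj_a v hv⟩,
        fun u hu => ⟨fun _ => ?_, fun v hv huv => ?_⟩⟩
      · rw [heq hu, ← or_comm]
        exact ⟨fun h => (hadj_a u hu).mp (hsymm _ _ h), fun h => hsymm _ _ ((hadj_a u hu).mpr h)⟩
      · rw [heq hu, heq hv]
        exact hadj u hu v hv huv

theorem finite_graph_realised_by_primes_general
    (V : Type*) [Finite V] (adj : V → V → Prop)
    (hsymm : ∀ u v : V, adj u v → adj v u) :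
    ∃ θ : V → ℕ, Function.Injective θ ∧
      (∀ v, (θ v).Prime) ∧
      ∀ u v : V, u ≠ v → (adj u v ↔ (θ u ∣ θ v - 1 ∨ θ v ∣ θ u - 1)) := by
  have := Fintype.ofFinite V
  obtain ⟨θ, hinj, hprime, hadj⟩ := exists_odd_prime_labelling adj hsymm Finset.univ
  refine ⟨θ, ?_, fun v => (hprime v (Finset.mem_univ v)).1,
    fun u v => hadj u (Finset.mem_univ u) v (Finset.mem_univ v)⟩
  rwa [Finset.coe_univ, Set.injOn_univ] at hinj

/-- Corollary 13.2. Every finite simple graph is isomorphic to the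
underlying undirected graph of some `Π_n`: there is an injective assignment `θ` of primes to
the vertices such that distinct vertices `u, v` are adjacent if and only if
`θ u ∣ θ v − 1` or `θ v ∣ θ u − 1`. -/
theorem finite_graph_realised_by_primes
    (V : Type*) [Finite V] (adj : V → V → Prop)
    (hsymm : ∀ u v : V, adj u v → adj v u)
    (hirrefl : ∀ v : V, ¬ adj v v) :
    ∃ θ : V → ℕ, Function.Injective θ ∧
      (∀ v, (θ v).Prime) ∧
      ∀ u v : V, u ≠ v → (adj u v ↔ (θ u ∣ θ v - 1 ∨ θ v ∣ θ u - 1)) :=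
  finite_graph_realised_by_primes_general V adj hsymm
end

section
/- Let U and V be disjoint finite sets of odd primes. Then there exists an odd prime p with p ∉ U ∪ V such that: for every u ∈ U, u divides p − 1; and for every v ∈ V, v does not divide p − 1 and p does not divide v − 1. (This is the extension property characterising the countable random graph, so the graph on the odd primes with adjacency given by q ~ p whenever q divides p − 1 or p divides q − 1 is isomorphic to the Erdős–Rényi random graph.) -/
/-- Proposition 14.1, extension property. For disjoint finite sets `U, V`
of odd primes there is an odd prime `p ∉ U ∪ V` adjacent in the graph `Π'` to every member
of `U` and to no member of `V`: every `u ∈ U` divides `p − 1`, while no `v ∈ V` divides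
`p − 1` and `p` divides no `v − 1`. -/
theorem odd_primes_graph_extension_property
    (U V : Finset ℕ)
    (hU : ∀ u ∈ U, Nat.Prime u ∧ Odd u)
    (hV : ∀ v ∈ V, Nat.Prime v ∧ Odd v)
    (hdisj : Disjoint U V) :
    ∃ p : ℕ, p.Prime ∧ Odd p ∧ p ∉ U ∧ p ∉ V ∧
      (∀ u ∈ U, u ∣ p - 1) ∧
      (∀ v ∈ V, ¬ v ∣ p - 1 ∧ ¬ p ∣ v - 1) := by
  classical
  set M : ℕ := 2 * ∏ u ∈ U, u with hM
  set P : ℕ := ∏ v ∈ V, v with hP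
  have hPodd : Nat.Coprime 2 P :=
    Nat.Coprime.prod_right fun v hv => (Nat.coprime_two_left).mpr (hV v hv).2
  have hUV : Nat.Coprime (∏ u ∈ U, u) P := by
    refine Nat.Coprime.prod_left fun u hu => Nat.Coprime.prod_right fun v hv => ?_
    refine (Nat.coprime_primes (hU u hu).1 (hV v hv).1).mpr ?_
    rintro rfl
    exact (Finset.disjoint_left.mp hdisj hu) hv
  have hMP : Nat.Coprime M P := Nat.Coprime.mul hPodd hUV
  obtain ⟨a, ha⟩ := Nat.chineseRemainder hMP 1 2
  obtain ⟨haM, haP⟩ := ha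
  have hMpos : 0 < M := by
    have : 0 < ∏ u ∈ U, u := Finset.prod_pos fun u hu => (hU u hu).1.pos
    positivity
  have hPpos : 0 < P := Finset.prod_pos fun v hv => (hV v hv).1.pos
  have hNpos : 0 < M * P := Nat.mul_pos hMpos hPpos
  haveI : NeZero (M * P) := ⟨hNpos.ne'⟩
  -- a is coprime to M * P
  have hcop : Nat.Coprime a (M * P) := by
    have h1 : Nat.Coprime a M := by
      have := Nat.ModEq.gcd_eq haM
      simpa [Nat.Coprime] using this
    have h2 : Nat.Coprime a P := by
      have h2' := Nat.ModEq.gcd_eq haP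
      have : Nat.Coprime 2 P := hPodd
      simpa [Nat.Coprime, h2'] using this
    exact Nat.Coprime.mul_right h1 h2
  have hunit : IsUnit ((a : ZMod (M * P))) := (ZMod.isUnit_iff_coprime a (M * P)).mpr hcop
  obtain ⟨p, hpgt, hpp, hpa⟩ :=
    Nat.forall_exists_prime_gt_and_eq_mod hunit (M * P + U.sup id + V.sup id + 2)
  have hmod : p ≡ a [MOD M * P] := (ZMod.natCast_eq_natCast_iff p a (M * P)).mp hpa
  have hgtU : ∀ u ∈ U, u < p := fun u hu =>
    lt_of_le_of_lt (le_trans (Finset.le_sup (f := id) hu) (by omega)) hpgt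
  have hgtV : ∀ v ∈ V, v < p := fun v hv =>
    lt_of_le_of_lt (le_trans (Finset.le_sup (f := id) hv) (by omega)) hpgt
  have hp2 : 2 < p := lt_of_le_of_lt (by omega) hpgt
  have hp1 : 1 ≤ p := hpp.one_lt.le
  refine ⟨p, hpp, hpp.odd_of_ne_two (by omega), fun h => absurd (hgtU p h) (lt_irrefl p),
    fun h => absurd (hgtV p h) (lt_irrefl p), ?_, ?_⟩
  · intro u hu
    have huM : u ∣ M := Dvd.dvd.mul_left (Finset.dvd_prod_of_mem id hu) 2
    have h1 : p ≡ 1 [MOD u] :=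
      ((hmod.of_dvd (huM.mul_right P)).trans (haM.of_dvd huM))
    exact (Nat.modEq_iff_dvd' hp1).mp h1.symm
  · intro v hv
    have hvP : v ∣ P := Finset.dvd_prod_of_mem id hv
    have h2 : p ≡ 2 [MOD v] :=
      ((hmod.of_dvd (Dvd.dvd.mul_left hvP M)).trans (haP.of_dvd hvP))
    have hv3 : 3 ≤ v := by
      have h2le := (hV v hv).1.two_le
      have hodd := Nat.odd_iff.mp (hV v hv).2
      omega
    constructor
    · intro hdvd
      have h1 : p ≡ 1 [MOD v] := ((Nat.modEq_iff_dvd' hp1).mpr hdvd).symm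
      have h21 : (2 : ℕ) ≡ 1 [MOD v] := h2.symm.trans h1
      have e2 : 2 % v = 2 := Nat.mod_eq_of_lt (by omega)
      have e1 : 1 % v = 1 := Nat.mod_eq_of_lt (by omega)
      rw [Nat.ModEq, e2, e1] at h21
      omega
    · exact Nat.not_dvd_of_pos_of_lt (by omega) (by have := hgtV v hv; omega)
end

section
/- Let n be an odd positive integer and let G be an n-isobicyclic group with canonical generators x and y. If G has an automorphism φ with φ(x) = x⁻¹ and φ(y) = y⁻¹ (i.e. the corresponding regular embedding of K_{n,n} is reflexible), then G is abelian, and hence G ≅ C_n × C_n with (G, x, y) the standard n-isobicyclic triple; in particular, for odd n the standard embedding is the only reflexible regular embedding of K_{n,n}. -/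
open scoped Pointwise

/-- For odd `n`, if an `n`-isobicyclic group `G` with canonical generators
`x, y` admits an automorphism inverting both `x` and `y` (i.e. the corresponding regular
embedding of `K_{n,n}` is reflexible), then `G` is abelian, and `(G, x, y)` is the standard
triple: `G ≅ C_n × C_n` via an isomorphism sending `x` and `y` to the generators of the two
factors. -/
theorem odd_reflexible_isobicyclic_is_standard
    {G : Type*} [Group G] [Finite G] (n : ℕ) (hn : 0 < n) (hodd : Odd n) (x y : G)
    (hx : orderOf x = n) (hy : orderOf y = n)
    (hprod : (↑(Subgroup.zpowers x) * ↑(Subgroup.zpowers y) : Set G) = Set.univ)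
    (hinter : Subgroup.zpowers x ⊓ Subgroup.zpowers y = ⊥)
    (α : G ≃* G) (hαx : α x = y) (hαy : α y = x)
    (φ : G ≃* G) (hφx : φ x = x⁻¹) (hφy : φ y = y⁻¹) :
    (∀ a b : G, a * b = b * a) ∧
    ∃ e : G ≃* Multiplicative (ZMod n) × Multiplicative (ZMod n),
      e x = (Multiplicative.ofAdd (1 : ZMod n), 1) ∧
      e y = (1, Multiplicative.ofAdd (1 : ZMod n)) := by
  haveI : NeZero n := ⟨hn.ne'⟩
  -- every element of `G` is `x^i * y^j`
  have rep : ∀ g : G, ∃ i j : ℤ, x ^ i * y ^ j = g := by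
    intro g
    have hg : g ∈ (↑(Subgroup.zpowers x) * ↑(Subgroup.zpowers y) : Set G) := by
      rw [hprod]; trivial
    rw [Set.mem_mul] at hg
    obtain ⟨u, hu, v, hv, huv⟩ := hg
    rw [SetLike.mem_coe, Subgroup.mem_zpowers_iff] at hu hv
    obtain ⟨i, rfl⟩ := hu
    obtain ⟨j, rfl⟩ := hv
    exact ⟨i, j, huv⟩
  obtain ⟨a, b, h1⟩ := rep (y * x)
  replace h1 : y * x = x ^ a * y ^ b := h1.symm
  -- apply φ and invert to get the companion relation
  have h2 : x * y = y ^ b * x ^ a := by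
    have h' := congrArg (fun g : G => (φ g)⁻¹) h1
    simpa [map_mul, map_zpow, hφx, hφy, mul_inv_rev, inv_zpow] using h'
  have hxa1 : x ^ (a + 1) = x * x ^ a := by
    rw [add_comm, zpow_add, zpow_one]
  have hxa1' : x ^ (a + 1) = x ^ a * x := by rw [zpow_add, zpow_one]
  have hyb1 : y ^ (b + 1) = y * y ^ b := by
    rw [add_comm, zpow_add, zpow_one]
  have hyb1' : y ^ (b + 1) = y ^ b * y := by rw [zpow_add, zpow_one]
  have hxmodN : ∀ m : ℕ, x ^ (m % n) = x ^ m := fun m => by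
    rw [← hx]; exact pow_mod_orderOf x m
  have hymodN : ∀ m : ℕ, y ^ (m % n) = y ^ m := fun m => by
    rw [← hy]; exact pow_mod_orderOf y m
  -- `x^(a+1)` commutes with `y`
  have central_x : y * x ^ (a + 1) = x ^ (a + 1) * y := by
    calc y * x ^ (a + 1) = (y * x) * x ^ a := by rw [hxa1, ← mul_assoc]
      _ = x ^ a * (y ^ b * x ^ a) := by rw [h1, mul_assoc]
      _ = x ^ a * (x * y) := by rw [← h2]
      _ = x ^ (a + 1) * y := by rw [hxa1', mul_assoc]
  -- `y^(b+1)` commutes with `x`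
  have central_y : x * y ^ (b + 1) = y ^ (b + 1) * x := by
    calc x * y ^ (b + 1) = (x * y) * y ^ b := by rw [hyb1, ← mul_assoc]
      _ = y ^ b * (x ^ a * y ^ b) := by rw [h2, mul_assoc]
      _ = y ^ b * (y * x) := by rw [← h1]
      _ = y ^ (b + 1) * x := by rw [hyb1', mul_assoc]
  -- squares of `x*y` and `y*x` agree
  have hsq : (x * y) * (x * y) = (y * x) * (y * x) := by
    have c1 : (y * x) * (y * x) = x ^ (a + 1) * y ^ (b + 1) := by
      calc (y * x) * (y * x) = x ^ a * (y ^ b * x ^ a) * y ^ b := by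
            rw [h1]; group
        _ = x ^ a * (x * y) * y ^ b := by rw [← h2]
        _ = x ^ (a + 1) * y ^ (b + 1) := by rw [hxa1', hyb1]; group
    have c2 : (x * y) * (x * y) = y ^ (b + 1) * x ^ (a + 1) := by
      calc (x * y) * (x * y) = y ^ b * (x ^ a * y ^ b) * x ^ a := by
            rw [h2]; group
        _ = y ^ b * (y * x) * x ^ a := by rw [← h1]
        _ = y ^ (b + 1) * x ^ (a + 1) := by rw [hyb1', hxa1]; group
    have hc : Commute x (y ^ (b + 1)) := central_y
    have c3 : Commute (x ^ (a + 1)) (y ^ (b + 1)) := hc.zpow_left (a + 1)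
    rw [c1, c2, c3.eq]
  -- the canonical bijection (no commutativity needed)
  have hFbij : Function.Bijective
      (fun p : Multiplicative (ZMod n) × Multiplicative (ZMod n) =>
        x ^ (Multiplicative.toAdd p.1).val * y ^ (Multiplicative.toAdd p.2).val) := by
    constructor
    · rintro ⟨p1, p2⟩ ⟨q1, q2⟩ hpq
      simp only at hpq
      set i := (Multiplicative.toAdd p1).val with hi
      set j := (Multiplicative.toAdd p2).val with hj
      set k := (Multiplicative.toAdd q1).val with hk
      set l := (Multiplicative.toAdd q2).val with hl
      have heq' : x ^ (i : ℤ) * y ^ (j : ℤ) = x ^ (k : ℤ) * y ^ (l : ℤ) := by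
        rw [zpow_natCast, zpow_natCast, zpow_natCast, zpow_natCast]
        exact hpq
      have hg : x ^ ((i : ℤ) - (k : ℤ)) = y ^ ((l : ℤ) - (j : ℤ)) := by
        have h5 : x ^ (i : ℤ) = x ^ (k : ℤ) * y ^ (l : ℤ) * (y ^ (j : ℤ))⁻¹ :=
          eq_mul_inv_iff_mul_eq.mpr heq'
        have h6 : x ^ ((i : ℤ) - (k : ℤ)) = (x ^ (k : ℤ))⁻¹ * x ^ (i : ℤ) := by
          group
        rw [h6, h5]; group
      have hmem : x ^ ((i : ℤ) - (k : ℤ)) ∈ Subgroup.zpowers x ⊓ Subgroup.zpowers y := by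
        refine Subgroup.mem_inf.mpr ⟨Subgroup.mem_zpowers_iff.mpr ⟨_, rfl⟩, ?_⟩
        exact Subgroup.mem_zpowers_iff.mpr ⟨(l : ℤ) - (j : ℤ), hg.symm⟩
      rw [hinter, Subgroup.mem_bot] at hmem
      have hone_y : y ^ ((l : ℤ) - (j : ℤ)) = 1 := by rw [← hg, hmem]
      have hdx : ((n : ℕ) : ℤ) ∣ (i : ℤ) - (k : ℤ) := by
        rw [← hx]; exact orderOf_dvd_iff_zpow_eq_one.mpr hmem
      have hdy : ((n : ℕ) : ℤ) ∣ (l : ℤ) - (j : ℤ) := by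
        rw [← hy]; exact orderOf_dvd_iff_zpow_eq_one.mpr hone_y
      have e1 : p1 = q1 := by
        have h0 : (((i : ℤ) - (k : ℤ) : ℤ) : ZMod n) = 0 :=
          (ZMod.intCast_zmod_eq_zero_iff_dvd _ n).mpr hdx
        push_cast at h0
        have h0' : ((i : ZMod n)) = ((k : ZMod n)) := by
          rwa [sub_eq_zero] at h0
        have := ZMod.natCast_rightInverse (n := n)
        have hp : ((i : ZMod n)) = Multiplicative.toAdd p1 := this _
        have hq : ((k : ZMod n)) = Multiplicative.toAdd q1 := this _
        have : Multiplicative.toAdd p1 = Multiplicative.toAdd q1 := by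
          rw [← hp, ← hq, h0']
        exact Multiplicative.toAdd.injective this
      have e2 : p2 = q2 := by
        have h0 : (((l : ℤ) - (j : ℤ) : ℤ) : ZMod n) = 0 :=
          (ZMod.intCast_zmod_eq_zero_iff_dvd _ n).mpr hdy
        push_cast at h0
        have h0' : ((l : ZMod n)) = ((j : ZMod n)) := by
          rwa [sub_eq_zero] at h0
        have := ZMod.natCast_rightInverse (n := n)
        have hp : ((j : ZMod n)) = Multiplicative.toAdd p2 := this _
        have hq : ((l : ZMod n)) = Multiplicative.toAdd q2 := this _
        have : Multiplicative.toAdd p2 = Multiplicative.toAdd q2 := by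
          rw [← hp, ← hq, h0']
        exact Multiplicative.toAdd.injective this
      exact Prod.ext e1 e2
    · intro g
      obtain ⟨m, k, hmk⟩ := rep g
      refine ⟨(Multiplicative.ofAdd ((m : ZMod n)), Multiplicative.ofAdd ((k : ZMod n))), ?_⟩
      simp only
      have hxm : x ^ ((Multiplicative.toAdd (Multiplicative.ofAdd ((m : ZMod n)))).val) = x ^ m := by
        rw [toAdd_ofAdd, ← zpow_natCast, ZMod.val_intCast, ← hx, zpow_mod_orderOf]
      have hyk : y ^ ((Multiplicative.toAdd (Multiplicative.ofAdd ((k : ZMod n)))).val) = y ^ k := by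
        rw [toAdd_ofAdd, ← zpow_natCast, ZMod.val_intCast, ← hy, zpow_mod_orderOf]
      rw [hxm, hyk, hmk]
  -- `|G| = n * n` is odd
  have hcard : Nat.card G = n * n := by
    have := Nat.card_eq_of_bijective _ hFbij
    rw [← this, Nat.card_prod, Nat.card_congr (Multiplicative.toAdd (α := ZMod n)),
      Nat.card_zmod]
  have hoddcard : Odd (Nat.card G) := by rw [hcard]; exact hodd.mul hodd
  -- squaring is injective in odd order groups, so `x*y = y*x`
  have hxycomm : x * y = y * x := by
    obtain ⟨t, ht⟩ := hoddcard
    have key : ∀ g : G, g ^ (2 * (t + 1)) = g := by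
      intro g
      have h21 : 2 * (t + 1) = Nat.card G + 1 := by omega
      rw [h21, pow_succ, pow_card_eq_one', one_mul]
    calc x * y = (x * y) ^ (2 * (t + 1)) := (key _).symm
      _ = ((x * y) * (x * y)) ^ (t + 1) := by rw [pow_mul, pow_two]
      _ = ((y * x) * (y * x)) ^ (t + 1) := by rw [hsq]
      _ = (y * x) ^ (2 * (t + 1)) := by rw [pow_mul, pow_two]
      _ = y * x := key _
  have cxy : Commute x y := hxycomm
  -- `G` is abelian
  have hcomm : ∀ a b : G, a * b = b * a := by
    intro g h
    obtain ⟨i, j, rfl⟩ := rep g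
    obtain ⟨k, l, rfl⟩ := rep h
    exact Commute.mul_left
      (Commute.mul_right ((Commute.refl x).zpow_zpow i k) (cxy.zpow_zpow i l))
      (Commute.mul_right (cxy.symm.zpow_zpow j k) ((Commute.refl y).zpow_zpow j l))
  refine ⟨hcomm, ?_⟩
  -- build the isomorphism
  let φX : Multiplicative (ZMod n) →* G :=
    { toFun := fun i => x ^ (Multiplicative.toAdd i).val
      map_one' := by
        show x ^ (0 : ZMod n).val = 1
        rw [ZMod.val_zero, pow_zero]
      map_mul' := fun i j => by
        show x ^ (Multiplicative.toAdd i + Multiplicative.toAdd j).val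
            = x ^ (Multiplicative.toAdd i).val * x ^ (Multiplicative.toAdd j).val
        rw [ZMod.val_add, hxmodN, pow_add] }
  let φY : Multiplicative (ZMod n) →* G :=
    { toFun := fun j => y ^ (Multiplicative.toAdd j).val
      map_one' := by
        show y ^ (0 : ZMod n).val = 1
        rw [ZMod.val_zero, pow_zero]
      map_mul' := fun i j => by
        show y ^ (Multiplicative.toAdd i + Multiplicative.toAdd j).val
            = y ^ (Multiplicative.toAdd i).val * y ^ (Multiplicative.toAdd j).val
        rw [ZMod.val_add, hymodN, pow_add] }
  let f : Multiplicative (ZMod n) × Multiplicative (ZMod n) →* G :=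
    MonoidHom.noncommCoprod φX φY (fun m k => by
      exact (cxy.pow_pow _ _ : Commute (x ^ _) (y ^ _)))
  have hfbij : Function.Bijective f := hFbij
  let iso := MulEquiv.ofBijective f hfbij
  refine ⟨iso.symm, ?_, ?_⟩
  · rw [MulEquiv.symm_apply_eq]
    symm
    show x ^ (1 : ZMod n).val * y ^ (0 : ZMod n).val = x
    rw [ZMod.val_zero, pow_zero, mul_one, ZMod.val_one_eq_one_mod, hxmodN, pow_one]
  · rw [MulEquiv.symm_apply_eq]
    symm
    show x ^ (0 : ZMod n).val * y ^ (1 : ZMod n).val = y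
    rw [ZMod.val_zero, pow_zero, one_mul, ZMod.val_one_eq_one_mod, hymodN, pow_one]
end
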